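/- arXiv:1904.11681 — 8 statements merged into one kernel-verified Lean document; each statement's English description precedes it below -/
import Mathlib

section
/- Under Assumptions 1–3, the iterates of SOGD with parameters δ > 0 and α = D/√2 satisfy, for every w ∈ W and every T ≥ 1: Σ_{t=1}^T f_t(w_t) − Σ_{t=1}^T f_t(w) ≤ 8 H D² + D √(2δ + 8H Σ_{t=1}^T f_t(w)). -/
/-!
By convexity the regret against `x` is at most the linearized regret
`∑ ⟪∇f_t(w_t), w_t - x⟫`, and the usual telescoping analysis of projected gradient descent
with nonincreasing steps `η_t = α / √(δ + ∑_{i ≤ t} ‖∇f_i(w_i)‖²)` bounds the latter by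
`D √(2 (δ + ∑_t ‖∇f_t(w_t)‖²))` when `α = D/√2`. A nonnegative `H`-smooth function is
self-bounding, `‖∇f(w)‖² ≤ 4 H f(w)`, so the regret `r` satisfies
`r ≤ D √(2δ + 8H (∑_t f_t(x) + r))`, and solving this quadratic inequality in `r` gives the bound.
-/

open Finset
open scoped RealInnerProductSpace Gradient

theorem le_four_mul_of_forall_mul_le {a c H : ℝ} (hH : 0 ≤ H)
    (h : ∀ t, 0 ≤ t → t * a ≤ c + H * t ^ 2 * a) : a ≤ 4 * H * c := by
  rcases hH.eq_or_lt with rfl | hH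
  · by_contra! hpos
    have := h ((c + 1) / a) (div_nonneg (by linarith [h 0 le_rfl]) (by linarith))
    rw [div_mul_cancel₀ _ (by linarith)] at this
    linarith
  · have := h (2 * H)⁻¹ (by positivity)
    field_simp at this
    nlinarith

theorem div_sqrt_add_le {s c : ℝ} (hs : 0 ≤ s) (hc : 0 ≤ c) :
    c / √(s + c) ≤ 2 * (√(s + c) - √s) := by
  rcases (add_nonneg hs hc).eq_or_lt with h0 | hpos
  · rw [← h0]; simp [show s = 0 by linarith]
  have hu := Real.sq_sqrt (add_nonneg hs hc)
  have hv := Real.sq_sqrt hs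
  rw [div_le_iff₀ (Real.sqrt_pos.mpr hpos)]
  nlinarith [sq_nonneg (√(s + c) - √s)]

theorem sum_div_sqrt_partialSum_le {δ : ℝ} (hδ : 0 ≤ δ) {a : ℕ → ℝ} (ha : ∀ i, 0 ≤ a i)
    (T : ℕ) :
    ∑ t ∈ Icc 1 T, a t / √(δ + ∑ i ∈ Icc 1 t, a i) ≤ 2 * (√(δ + ∑ i ∈ Icc 1 T, a i) - √δ) := by
  induction T with
  | zero => simp
  | succ T ih =>
    rw [sum_Icc_succ_top (by omega), sum_Icc_succ_top (by omega), ← add_assoc]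
    have := div_sqrt_add_le (add_nonneg hδ (sum_nonneg fun i (_ : i ∈ Icc 1 T) => ha i))
      (ha (T + 1))
    linarith

theorem sum_mul_sub_le {l b : ℕ → ℝ} {B : ℝ} (hl0 : 0 ≤ l 0) (hl : Monotone l)
    (hb : ∀ t ≥ 1, b t ≤ B) (T : ℕ) :
    ∑ t ∈ Icc 1 T, l t * (b t - b (t + 1)) ≤ l T * (B - b (T + 1)) := by
  induction T with
  | zero => simpa using mul_nonneg hl0 (sub_nonneg.mpr (hb 1 le_rfl))
  | succ T ih =>
    rw [sum_Icc_succ_top (by omega)]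
    have := mul_le_mul_of_nonneg_right (hl T.le_succ) (sub_nonneg.mpr (hb (T + 1) (by omega)))
    linarith

theorem le_mul_sq_add_mul_sqrt {r A B D : ℝ} (hD : 0 ≤ D) (hA : 0 ≤ A) (hB : 0 ≤ B)
    (h : r ≤ D * √(A + B * r)) : r ≤ B * D ^ 2 + D * √A := by
  have hc : 0 ≤ D * √A := by positivity
  by_contra! hr
  have hr0 : 0 < r := by linarith [mul_nonneg hB (sq_nonneg D)]
  have hsq : r ^ 2 ≤ D ^ 2 * (A + B * r) := by
    have harg : 0 ≤ A + B * r := by positivity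
    calc r ^ 2 ≤ (D * √(A + B * r)) ^ 2 := pow_le_pow_left₀ hr0.le h 2
      _ = D ^ 2 * (A + B * r) := by rw [mul_pow, Real.sq_sqrt harg]
  have hA' : (D * √A) ^ 2 = D ^ 2 * A := by rw [mul_pow, Real.sq_sqrt hA]
  have h1 := mul_lt_mul_of_pos_left (show D * √A < r - B * D ^ 2 by linarith) hr0
  have h2 := mul_le_mul_of_nonneg_left
    (show D * √A ≤ r by linarith [mul_nonneg hB (sq_nonneg D)]) hc
  nlinarith

section InnerProductSpace

variable {E : Type*} [NormedAddCommGroup E] [InnerProductSpace ℝ E]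

theorem Convex.norm_sub_le_of_forall_norm_sub_le {W : Set E} (hW : Convex ℝ W) {z p x : E}
    (hp : p ∈ W) (hmin : ∀ y ∈ W, ‖z - p‖ ≤ ‖z - y‖) (hx : x ∈ W) : ‖p - x‖ ≤ ‖z - x‖ := by
  have : Nonempty W := ⟨⟨p, hp⟩⟩
  have hinf : ‖z - p‖ = ⨅ y : W, ‖z - y‖ :=
    le_antisymm (le_ciInf fun y => hmin y y.2)
      (ciInf_le ⟨0, Set.forall_mem_range.mpr fun y : W => norm_nonneg (z - y)⟩ ⟨p, hp⟩)
  have hobtuse := (norm_eq_iInf_iff_real_inner_le_zero hW hp).mp hinf x hx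
  have hexpand : ‖z - x‖ ^ 2 = ‖z - p‖ ^ 2 - 2 * ⟪z - p, x - p⟫ + ‖p - x‖ ^ 2 := by
    rw [← norm_neg (p - x), neg_sub, ← norm_sub_sq_real]; congr 1; abel_nf
  nlinarith [norm_nonneg (z - x), norm_nonneg (p - x), sq_nonneg ‖z - p‖]

theorem inner_le_of_norm_sub_le {p q g x : E} {η : ℝ} (hη : 0 < η)
    (h : ‖q - x‖ ≤ ‖p - η • g - x‖) :
    ⟪g, p - x⟫ ≤ (2 * η)⁻¹ * (‖p - x‖ ^ 2 - ‖q - x‖ ^ 2) + η * ‖g‖ ^ 2 / 2 := by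
  have hexpand : ‖p - η • g - x‖ ^ 2 = ‖p - x‖ ^ 2 - 2 * η * ⟪g, p - x⟫ + η ^ 2 * ‖g‖ ^ 2 := by
    rw [sub_right_comm, norm_sub_sq_real, real_inner_smul_right, real_inner_comm, norm_smul,
      Real.norm_eq_abs, mul_pow, sq_abs]
    ring
  have hsq : ‖q - x‖ ^ 2 ≤ ‖p - η • g - x‖ ^ 2 := pow_le_pow_left₀ (norm_nonneg _) h 2
  rw [← sub_nonneg]
  have : (2 * η)⁻¹ * (‖p - x‖ ^ 2 - ‖q - x‖ ^ 2) + η * ‖g‖ ^ 2 / 2 - ⟪g, p - x⟫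
      = (2 * η)⁻¹ * (‖p - η • g - x‖ ^ 2 - ‖q - x‖ ^ 2) := by
    rw [hexpand]; field_simp; ring
  rw [this]
  exact mul_nonneg (by positivity) (by linarith)

theorem sum_inner_le_of_antitone_steps {W : Set E} {D : ℝ}
    (hdiam : ∀ y ∈ W, ∀ z ∈ W, ‖y - z‖ ≤ D) {x : E} (hx : x ∈ W) {w g : ℕ → E} {η : ℕ → ℝ}
    (hw : ∀ t ≥ 1, w t ∈ W) (hη : ∀ t, 0 < η t) (hη_anti : Antitone η)
    (hstep : ∀ t ≥ 1, ‖w (t + 1) - x‖ ≤ ‖w t - η t • g t - x‖) (T : ℕ) :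
    ∑ t ∈ Icc 1 T, ⟪g t, w t - x⟫ ≤ (2 * η T)⁻¹ * D ^ 2 + ∑ t ∈ Icc 1 T, η t * ‖g t‖ ^ 2 / 2 := by
  have hl : Monotone fun t => (2 * η t)⁻¹ := fun s t hst =>
    inv_anti₀ (by linarith [hη t]) (by linarith [hη_anti hst])
  have hb : ∀ t ≥ 1, ‖w t - x‖ ^ 2 ≤ D ^ 2 := fun t ht =>
    pow_le_pow_left₀ (norm_nonneg _) (hdiam _ (hw t ht) x hx) 2
  calc ∑ t ∈ Icc 1 T, ⟪g t, w t - x⟫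
      ≤ ∑ t ∈ Icc 1 T, ((2 * η t)⁻¹ * (‖w t - x‖ ^ 2 - ‖w (t + 1) - x‖ ^ 2)
          + η t * ‖g t‖ ^ 2 / 2) :=
        sum_le_sum fun t ht => inner_le_of_norm_sub_le (hη t) (hstep t (mem_Icc.mp ht).1)
    _ ≤ (2 * η T)⁻¹ * (D ^ 2 - ‖w (T + 1) - x‖ ^ 2) + ∑ t ∈ Icc 1 T, η t * ‖g t‖ ^ 2 / 2 := by
        rw [sum_add_distrib]
        gcongr
        exact sum_mul_sub_le (by have := hη 0; positivity) hl hb T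
    _ ≤ (2 * η T)⁻¹ * D ^ 2 + ∑ t ∈ Icc 1 T, η t * ‖g t‖ ^ 2 / 2 := by
        gcongr
        · have := hη T; positivity
        · exact sub_le_self _ (sq_nonneg _)

theorem sum_inner_le_sogd {W : Set E} (hW : Convex ℝ W) {proj : E → E}
    (hproj : ∀ z, proj z ∈ W ∧ ∀ y ∈ W, ‖z - proj z‖ ≤ ‖z - y‖)
    {D : ℝ} (hdiam : ∀ y ∈ W, ∀ z ∈ W, ‖y - z‖ ≤ D) {δ : ℝ} (hδ : 0 < δ) {w g : ℕ → E}
    (hw1 : w 1 ∈ W)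
    (hwrec : ∀ t ≥ 1, w (t + 1) =
      proj (w t - (D / √2 / √(δ + ∑ i ∈ Icc 1 t, ‖g i‖ ^ 2)) • g t))
    {x : E} (hx : x ∈ W) (T : ℕ) :
    ∑ t ∈ Icc 1 T, ⟪g t, w t - x⟫ ≤ D * √(2 * (δ + ∑ t ∈ Icc 1 T, ‖g t‖ ^ 2)) := by
  set S : ℕ → ℝ := fun t => δ + ∑ i ∈ Icc 1 t, ‖g i‖ ^ 2
  have hS_mono : Monotone S := fun s t hst =>
    (add_le_add_iff_left δ).mpr (sum_le_sum_of_subset_of_nonneg (Icc_subset_Icc_right hst)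
      fun i _ _ => sq_nonneg ‖g i‖)
  have hw : ∀ t ≥ 1, w t ∈ W := fun t ht =>
    Nat.le_induction hw1 (fun n hn _ => hwrec n hn ▸ (hproj _).1) t ht
  have hD : 0 ≤ D := by simpa using hdiam x hx x hx
  rcases hD.eq_or_lt with rfl | hD
  · refine (sum_eq_zero fun t ht => ?_).le.trans (by simp)
    have := hdiam _ (hw t (mem_Icc.mp ht).1) x hx
    rw [norm_le_zero_iff.mp this, inner_zero_right]
  have hstep : ∀ t ≥ 1, ‖w (t + 1) - x‖ ≤ ‖w t - (D / √2 / √(S t)) • g t - x‖ := fun t ht =>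
    hwrec t ht ▸ hW.norm_sub_le_of_forall_norm_sub_le (hproj _).1 (hproj _).2 hx
  have hsum := sum_div_sqrt_partialSum_le hδ.le (fun i => sq_nonneg ‖g i‖) T
  calc ∑ t ∈ Icc 1 T, ⟪g t, w t - x⟫
      ≤ (2 * (D / √2 / √(S T)))⁻¹ * D ^ 2
          + ∑ t ∈ Icc 1 T, D / √2 / √(S t) * ‖g t‖ ^ 2 / 2 :=
        sum_inner_le_of_antitone_steps hdiam hx hw (fun t => by positivity)
          (fun s t hst => by gcongr; exact hS_mono hst) hstep T
    _ = D / √2 * (√(S T) + (∑ t ∈ Icc 1 T, ‖g t‖ ^ 2 / √(S t)) / 2) := by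
        rw [sum_div, mul_add, mul_sum]
        congr 1
        · field_simp
          rw [Real.sq_sqrt zero_le_two]
        · exact sum_congr rfl fun t _ => by ring
    _ ≤ D / √2 * (√(S T) + √(S T)) := by
        gcongr
        linarith [Real.sqrt_nonneg δ]
    _ = D * √(2 * S T) := by
        rw [Real.sqrt_mul zero_le_two]
        field_simp
        rw [Real.sq_sqrt zero_le_two]
        ring

variable [CompleteSpace E] {f : E → ℝ}

theorem ConvexOn.sub_le_inner_gradient (hf : ConvexOn ℝ Set.univ f) {x : E}
    (hx : DifferentiableAt ℝ f x) (y : E) : f x - f y ≤ ⟪∇ f x, x - y⟫ := by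
  have hline : HasDerivAt (f ∘ AffineMap.lineMap (k := ℝ) x y) (fderiv ℝ f x (y - x)) 0 := by
    have hfx : HasFDerivAt f (fderiv ℝ f x) (AffineMap.lineMap x y (0 : ℝ)) := by
      simpa using hx.hasFDerivAt
    exact hfx.comp_hasDerivAt 0 AffineMap.hasDerivAt_lineMap
  have hslope := (hf.comp_affineMap (AffineMap.lineMap x y)).le_slope_of_hasDerivAt
    (Set.mem_univ 0) (Set.mem_univ 1) one_pos hline
  simp only [slope_def_field, Function.comp_apply, AffineMap.lineMap_apply_zero,
    AffineMap.lineMap_apply_one, sub_zero, div_one, ← inner_gradient_left] at hslope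
  rw [← neg_sub y x, inner_neg_right]
  linarith

theorem le_add_inner_gradient_add_mul_sq (hf : Differentiable ℝ f) {H : ℝ} (hH : 0 ≤ H)
    (hsmooth : ∀ a b, ‖∇ f a - ∇ f b‖ ≤ H * ‖a - b‖) (x y : E) :
    f y ≤ f x + ⟪∇ f x, y - x⟫ + H * ‖y - x‖ ^ 2 := by
  have hbound : ∀ z ∈ Metric.closedBall x ‖y - x‖,
      ‖fderiv ℝ f z - fderiv ℝ f x‖ ≤ H * ‖y - x‖ := by
    intro z hz
    rw [← toDual_gradient, ← toDual_gradient, ← map_sub, LinearIsometryEquiv.norm_map]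
    calc ‖∇ f z - ∇ f x‖ ≤ H * ‖z - x‖ := hsmooth z x
      _ ≤ H * ‖y - x‖ := by gcongr; simpa [dist_eq_norm] using hz
  have hmvt := (convex_closedBall x ‖y - x‖).norm_image_sub_le_of_norm_fderiv_le'
    (fun z _ => hf z) hbound (Metric.mem_closedBall_self (norm_nonneg _))
    (y := y) (by simp [dist_eq_norm])
  rw [← inner_gradient_left, Real.norm_eq_abs] at hmvt
  nlinarith [le_abs_self (f y - f x - ⟪∇ f x, y - x⟫)]

theorem norm_gradient_sq_le_of_nonneg (hf : Differentiable ℝ f) {H : ℝ} (hH : 0 ≤ H)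
    (hsmooth : ∀ a b, ‖∇ f a - ∇ f b‖ ≤ H * ‖a - b‖) (hnonneg : ∀ z, 0 ≤ f z) (x : E) :
    ‖∇ f x‖ ^ 2 ≤ 4 * H * f x :=
  le_four_mul_of_forall_mul_le hH fun t _ => by
    -- a gradient step of length `t` from `x` cannot make `f` negative
    have := le_add_inner_gradient_add_mul_sq hf hH hsmooth x (x - t • ∇ f x)
    rw [sub_sub_cancel_left, inner_neg_right, real_inner_smul_right, real_inner_self_eq_norm_sq,
      norm_neg, norm_smul, Real.norm_eq_abs, mul_pow, sq_abs] at this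
    nlinarith [hnonneg (x - t • ∇ f x)]

end InnerProductSpace

theorem stmt_1_general
    {E : Type*} [NormedAddCommGroup E] [InnerProductSpace ℝ E] [FiniteDimensional ℝ E]
    (W : Set E) (hWconvex : Convex ℝ W)
    -- `proj` is the metric projection onto `W`
    (proj : E → E)
    (hproj : ∀ x : E, proj x ∈ W ∧ ∀ y ∈ W, ‖x - proj x‖ ≤ ‖x - y‖)
    -- Assumption 1: the diameter of `W` is bounded by `D`
    (D : ℝ) (hdiam : ∀ x ∈ W, ∀ y ∈ W, ‖x - y‖ ≤ D)
    -- Assumption 2: the online functions are convex, differentiable and nonnegative on `E`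
    (f : ℕ → E → ℝ)
    (hconv : ∀ t, ConvexOn ℝ Set.univ (f t))
    (hdiff : ∀ t, Differentiable ℝ (f t))
    (hnonneg : ∀ t, ∀ x : E, 0 ≤ f t x)
    -- Assumption 3: the online functions are `H`-smooth
    (H : ℝ) (hH : 0 ≤ H)
    (hsmooth : ∀ t, ∀ x y : E,
      ‖gradient (f t) x - gradient (f t) y‖ ≤ H * ‖x - y‖)
    -- SOGD with parameters `δ > 0` and `α = D/√2`
    (δ : ℝ) (hδ : 0 < δ)
    (w : ℕ → E) (hw1 : w 1 ∈ W)
    (hwrec : ∀ t ≥ 1, w (t + 1) =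
      proj (w t - ((D / Real.sqrt 2) /
        Real.sqrt (δ + ∑ i ∈ Finset.Icc 1 t, ‖gradient (f i) (w i)‖ ^ 2)) •
          gradient (f t) (w t)))
    (T : ℕ) (x : E) (hx : x ∈ W) :
    ∑ t ∈ Finset.Icc 1 T, f t (w t) - ∑ t ∈ Finset.Icc 1 T, f t x
      ≤ 8 * H * D ^ 2
        + D * Real.sqrt (2 * δ + 8 * H * ∑ t ∈ Finset.Icc 1 T, f t x) := by
  have hD : 0 ≤ D := by simpa using hdiam x hx x hx
  have hlinear : ∑ t ∈ Icc 1 T, f t (w t) - ∑ t ∈ Icc 1 T, f t x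
      ≤ ∑ t ∈ Icc 1 T, ⟪∇ (f t) (w t), w t - x⟫ := by
    rw [← sum_sub_distrib]
    exact sum_le_sum fun t _ => (hconv t).sub_le_inner_gradient (hdiff t _) x
  have hgrad : ∑ t ∈ Icc 1 T, ‖∇ (f t) (w t)‖ ^ 2 ≤ 4 * H * ∑ t ∈ Icc 1 T, f t (w t) := by
    rw [mul_sum]
    exact sum_le_sum fun t _ =>
      norm_gradient_sq_le_of_nonneg (hdiff t) hH (hsmooth t) (hnonneg t) _
  have hSx : 0 ≤ ∑ t ∈ Icc 1 T, f t x := sum_nonneg fun t _ => hnonneg t x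
  refine le_mul_sq_add_mul_sqrt hD (by positivity) (by positivity) ?_
  calc _ ≤ D * √(2 * (δ + ∑ t ∈ Icc 1 T, ‖∇ (f t) (w t)‖ ^ 2)) :=
        hlinear.trans (sum_inner_le_sogd hWconvex hproj hdiam hδ hw1 hwrec hx T)
    _ ≤ _ := by gcongr; linarith

/-- Theorem 2: scale-free online gradient descent (SOGD) with parameters `δ > 0` and
`α = D/√2`, i.e. `w (t+1) = Π_W [w t − η t • ∇ f t (w t)]` with
`η t = α / √(δ + Σ_{i=1}^t ‖∇ f i (w i)‖²)`, on convex, differentiable, nonnegative,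
`H`-smooth losses over a nonempty closed convex domain `W` of diameter at most `D`,
satisfies, for every `x ∈ W` and every `T ≥ 1`,
`Σ_{t=1}^T f t (w t) − Σ_{t=1}^T f t x ≤ 8 H D² + D √(2δ + 8H Σ_{t=1}^T f t x)`. -/
theorem stmt_1
    {E : Type*} [NormedAddCommGroup E] [InnerProductSpace ℝ E] [FiniteDimensional ℝ E]
    (W : Set E) (hWne : W.Nonempty) (hWclosed : IsClosed W) (hWconvex : Convex ℝ W)
    -- `proj` is the metric projection onto `W`
    (proj : E → E)
    (hproj : ∀ x : E, proj x ∈ W ∧ ∀ y ∈ W, ‖x - proj x‖ ≤ ‖x - y‖)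
    -- Assumption 1: the diameter of `W` is bounded by `D`
    (D : ℝ) (hdiam : ∀ x ∈ W, ∀ y ∈ W, ‖x - y‖ ≤ D)
    -- Assumption 2: the online functions are convex, differentiable and nonnegative on `E`
    (f : ℕ → E → ℝ)
    (hconv : ∀ t, ConvexOn ℝ Set.univ (f t))
    (hdiff : ∀ t, Differentiable ℝ (f t))
    (hnonneg : ∀ t, ∀ x : E, 0 ≤ f t x)
    -- Assumption 3: the online functions are `H`-smooth
    (H : ℝ) (hH : 0 ≤ H)
    (hsmooth : ∀ t, ∀ x y : E,
      ‖gradient (f t) x - gradient (f t) y‖ ≤ H * ‖x - y‖)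
    -- SOGD with parameters `δ > 0` and `α = D/√2`
    (δ : ℝ) (hδ : 0 < δ)
    (w : ℕ → E) (hw1 : w 1 ∈ W)
    (hwrec : ∀ t ≥ 1, w (t + 1) =
      proj (w t - ((D / Real.sqrt 2) /
        Real.sqrt (δ + ∑ i ∈ Finset.Icc 1 t, ‖gradient (f i) (w i)‖ ^ 2)) •
          gradient (f t) (w t)))
    (T : ℕ) (hT : 1 ≤ T) (x : E) (hx : x ∈ W) :
    ∑ t ∈ Finset.Icc 1 T, f t (w t) - ∑ t ∈ Finset.Icc 1 T, f t x
      ≤ 8 * H * D ^ 2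
        + D * Real.sqrt (2 * δ + 8 * H * ∑ t ∈ Finset.Icc 1 T, f t x) :=
  stmt_1_general W hWconvex proj hproj D hdiam f hconv hdiff hnonneg H hH hsmooth δ hδ w hw1 hwrec T
    x hx
end

section
/- Let f_1, f_2, … : E → ℝ be convex functions with 0 ≤ f_t(w) ≤ 1 for all w ∈ W (W ⊆ E nonempty convex). For each positive integer i let (w_{t,i})_{t ∈ [i, e_i]} be an arbitrary sequence of points of W (the predictions of expert E_i). Define the SACS meta-algorithm quantities R_{t,i}, C_{t,i}, p_{t,i}, w_t as in the context. Then for any interval [i, j] ∈ 𝒞 and any t ∈ [i, j]: Σ_{u=i}^t [f_u(w_u) − f_u(w_{u,i})] ≤ c(t) + √(2 c(t) Σ_{u=i}^t f_u(w_{u,i})), where c(t) = 3 ln(4t²). -/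
/-- The AdaNormalHedge potential: `Φ(R, C) = exp([R]₊²/(3C))` for `C > 0` and `Φ(R, 0) = 1`. -/
noncomputable def anhPhi (R C : ℝ) : ℝ :=
  if 0 < C then Real.exp (max R 0 ^ 2 / (3 * C)) else 1

/-- The AdaNormalHedge weight: `w(R, C) = (Φ(R+1, C+1) − Φ(R−1, C+1))/2`. -/
noncomputable def anhWeight (R C : ℝ) : ℝ :=
  (anhPhi (R + 1) (C + 1) - anhPhi (R - 1) (C + 1)) / 2

/-- The right endpoint `e i` of the unique compact geometric covering (CGC) interval
`[i, e i] ∈ 𝒞` with left endpoint `i ≥ 1`: if `i = α·2^k` with `α` odd, then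
`e i = i + 2^k − 1`. -/
def cgcEnd (i : ℕ) : ℕ := i + 2 ^ padicValNat 2 i - 1

/-- The active set `S t = { i : i ≤ t ≤ e i }` of experts at round `t`. -/
def activeSet (t : ℕ) : Finset ℕ := (Finset.Icc 1 t).filter fun i => t ≤ cgcEnd i

lemma one_le_anhPhi (R C : ℝ) : 1 ≤ anhPhi R C := by
  unfold anhPhi
  split
  · rw [← Real.exp_zero]
    exact Real.exp_le_exp.2 (by positivity)
  · exact le_refl _

lemma anhPhi_nonneg (R C : ℝ) : 0 ≤ anhPhi R C :=
  le_trans zero_le_one (one_le_anhPhi R C)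

lemma anhPhi_of_pos {C : ℝ} (h : 0 < C) (R : ℝ) :
    anhPhi R C = Real.exp (max R 0 ^ 2 / (3 * C)) := if_pos h

lemma anhPhi_mono_R {C : ℝ} (hC : 0 < C) {R R' : ℝ} (h : R ≤ R') :
    anhPhi R C ≤ anhPhi R' C := by
  rw [anhPhi_of_pos hC, anhPhi_of_pos hC]
  apply Real.exp_le_exp.2
  have h2 : max R 0 ≤ max R' 0 := max_le_max h le_rfl
  have h0 : (0:ℝ) ≤ max R 0 := le_max_right _ _
  gcongr

lemma anhWeight_nonneg {C : ℝ} (hC : 0 ≤ C) (R : ℝ) : 0 ≤ anhWeight R C := by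
  unfold anhWeight
  have := anhPhi_mono_R (by linarith : (0:ℝ) < C + 1) (by linarith : R - 1 ≤ R + 1)
  linarith

lemma anhWeight_zero_zero : 0 < anhWeight 0 0 := by
  unfold anhWeight
  norm_num
  rw [anhPhi_of_pos one_pos, anhPhi_of_pos one_pos]
  apply Real.exp_lt_exp.2
  rw [show ((-1:ℝ) ⊔ 0) = 0 from by norm_num, show ((1:ℝ) ⊔ 0) = 1 from by norm_num]
  norm_num

lemma sq_div_combo {a b c₁ c₂ l m : ℝ} (hc₁ : 0 < c₁) (hc₂ : 0 < c₂)
    (hl : 0 ≤ l) (hm : 0 ≤ m) (hlm : l + m = 1) :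
    (l*a + m*b)^2 / (l*c₁ + m*c₂) ≤ l*(a^2/c₁) + m*(b^2/c₂) := by
  have hpos : 0 < l*c₁ + m*c₂ := by
    rcases hl.lt_or_eq with h | h
    · nlinarith [mul_pos h hc₁, mul_nonneg hm hc₂.le]
    · have hm1 : m = 1 := by linarith
      rw [← h, hm1]; nlinarith
  rw [div_le_iff₀ hpos]
  have key : (l*a + m*b)^2 * (c₁*c₂) ≤ (l*(a^2*c₂) + m*(b^2*c₁)) * (l*c₁ + m*c₂) := by
    nlinarith [sq_nonneg (a*c₂ - b*c₁), mul_nonneg hl hm, mul_pos hc₁ hc₂]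
  have h2 : l*(a^2/c₁) + m*(b^2/c₂) = (l*(a^2*c₂) + m*(b^2*c₁)) / (c₁*c₂) := by
    field_simp
  rw [h2, div_mul_eq_mul_div, le_div_iff₀ (mul_pos hc₁ hc₂)]
  nlinarith [key, hpos]

lemma anhPhi_segment {R C : ℝ} (hC : 0 ≤ C) (hRC : |R| ≤ C) {s : ℝ} (hs : s = 1 ∨ s = -1)
    {l : ℝ} (hl0 : 0 ≤ l) (hl1 : l ≤ 1) :
    anhPhi (R + l*s) (C + l) ≤ l * anhPhi (R + s) (C + 1) + (1 - l) * anhPhi R C := by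
  rcases eq_or_lt_of_le hC with hC0 | hCpos
  · -- C = 0, hence R = 0
    have hR : R = 0 := by
      have h1 : |R| ≤ 0 := by rw [hC0]; exact hRC
      exact abs_eq_zero.1 (le_antisymm h1 (abs_nonneg R))
    subst hR
    rw [← hC0]
    rcases eq_or_lt_of_le hl0 with hl | hl
    · rw [← hl]; norm_num
    · -- l > 0
      rcases hs with rfl | rfl
      · have e1 : anhPhi (0 + l*1) (0 + l) = Real.exp (l/3) := by
          rw [show (0:ℝ) + l*1 = l by ring, show (0:ℝ) + l = l by ring,
            anhPhi_of_pos hl, max_eq_left hl0]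
          congr 1
          field_simp
        rw [e1]
        have h2 := convexOn_exp.2 (Set.mem_univ (1/3 : ℝ)) (Set.mem_univ (0:ℝ))
          hl0 (by linarith : (0:ℝ) ≤ 1 - l) (by ring)
        simp only [smul_eq_mul, mul_zero, add_zero, Real.exp_zero, mul_one] at h2
        have e2 : anhPhi (0 + 1) (0 + 1) = Real.exp (1/3) := by
          rw [anhPhi_of_pos (by norm_num), show ((0:ℝ)+1) ⊔ 0 = 1 by norm_num]
          norm_num
        have e3 : anhPhi 0 0 = 1 := by unfold anhPhi; norm_num
        rw [e2, e3, mul_one]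
        calc Real.exp (l/3) = Real.exp (l * (1/3)) := by ring_nf
          _ ≤ l * Real.exp (1/3) + (1 - l) := h2
      · have e1 : anhPhi (0 + l*(-1)) (0 + l) = 1 := by
          rw [show (0:ℝ) + l = l by ring, anhPhi_of_pos hl,
            max_eq_right (by nlinarith : (0:ℝ) + l*(-1) ≤ 0)]
          norm_num
        have e3 : anhPhi 0 0 = 1 := by unfold anhPhi; norm_num
        rw [e1, e3, mul_one]
        have h4 := one_le_anhPhi (0 + -1) (0 + 1)
        nlinarith
  · -- C > 0
    have hCl : 0 < C + l := by linarith
    have hC1 : 0 < C + 1 := by linarith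
    rw [anhPhi_of_pos hCl, anhPhi_of_pos hC1, anhPhi_of_pos hCpos]
    set a := max (R + s) 0 with ha
    set b := max R 0 with hb
    have ha0 : 0 ≤ a := le_max_right _ _
    have hb0 : 0 ≤ b := le_max_right _ _
    have h1 : max (R + l*s) 0 ≤ l*a + (1-l)*b := by
      apply max_le
      · have e : R + l*s = l*(R+s) + (1-l)*R := by ring
        rw [e]
        have u1 := mul_le_mul_of_nonneg_left (le_max_left (R+s) 0) hl0
        have u2 := mul_le_mul_of_nonneg_left (le_max_left R 0) (by linarith : (0:ℝ) ≤ 1 - l)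
        rw [ha, hb]; linarith
      · exact add_nonneg (mul_nonneg hl0 ha0) (mul_nonneg (by linarith) hb0)
    have h2 : (max (R + l*s) 0)^2 ≤ (l*a + (1-l)*b)^2 :=
      pow_le_pow_left₀ (le_max_right _ _) h1 2
    have h3 : (l*a + (1-l)*b)^2 / (3*(C+l)) ≤ l*(a^2/(3*(C+1))) + (1-l)*(b^2/(3*C)) := by
      have e : 3*(C+l) = l*(3*(C+1)) + (1-l)*(3*C) := by ring
      rw [e]
      exact sq_div_combo (by linarith) (by linarith) hl0 (by linarith) (by ring)
    calc Real.exp ((max (R+l*s) 0)^2/(3*(C+l)))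
        ≤ Real.exp (l*(a^2/(3*(C+1))) + (1-l)*(b^2/(3*C))) :=
          Real.exp_le_exp.2 (le_trans ((div_le_div_iff_of_pos_right (by positivity)).2 h2) h3)
      _ ≤ l * Real.exp (a^2/(3*(C+1))) + (1-l) * Real.exp (b^2/(3*C)) := by
          have hcv := convexOn_exp.2 (Set.mem_univ (a^2/(3*(C+1)))) (Set.mem_univ (b^2/(3*C)))
            hl0 (by linarith : (0:ℝ) ≤ 1 - l) (by ring)
          simpa using hcv

lemma exp_four_thirds_le : Real.exp (4/3) ≤ 4 := by
  have h1 : Real.exp (4/3) ^ 3 = Real.exp 4 := by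
    rw [← Real.exp_nat_mul]; norm_num
  have h2 : Real.exp 4 ≤ 4 ^ 3 := by
    have he := Real.exp_one_lt_d9
    have h3 : Real.exp 4 = Real.exp 1 ^ 4 := by rw [← Real.exp_nat_mul]; norm_num
    rw [h3]
    have h4 : Real.exp 1 ^ 4 ≤ 2.7182818286 ^ 4 :=
      pow_le_pow_left₀ (Real.exp_pos 1).le he.le 4
    calc Real.exp 1 ^ 4 ≤ 2.7182818286 ^ 4 := h4
      _ ≤ 4 ^ 3 := by norm_num
  exact le_of_pow_le_pow_left₀ (by norm_num) (by norm_num) (h1 ▸ h2)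

lemma anhPhi_drift {R C : ℝ} (hC : 0 ≤ C) (hRC : |R| ≤ C) :
    anhPhi (R+1) (C+1) + anhPhi (R-1) (C+1) ≤ 2 * anhPhi R C + 6 := by
  have hC1 : (0:ℝ) < C + 1 := by linarith
  rcases lt_or_ge R 1 with hR1 | hR1
  · have e1 : anhPhi (R-1) (C+1) = 1 := by
      rw [anhPhi_of_pos hC1, max_eq_right (by linarith : R - 1 ≤ 0)]
      norm_num
    have e2 : anhPhi (R+1) (C+1) ≤ 4 := by
      rw [anhPhi_of_pos hC1]
      refine le_trans (le_trans (Real.exp_le_exp.2 ?_) exp_four_thirds_le) (by norm_num)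
      have hm : max (R+1) 0 ≤ 2 := max_le (by linarith) (by norm_num)
      have hm0 : (0:ℝ) ≤ max (R+1) 0 := le_max_right _ _
      have hsq : (max (R+1) 0)^2 ≤ 4 := by nlinarith
      exact div_le_div₀ (by norm_num) hsq (by norm_num) (by linarith)
    have h3 := one_le_anhPhi R C
    linarith
  · have hRC' : R ≤ C := le_trans (le_abs_self R) hRC
    have hCR : (1:ℝ) ≤ C := le_trans hR1 hRC'
    have hCpos : (0:ℝ) < C := by linarith
    rw [anhPhi_of_pos hC1, anhPhi_of_pos hC1, anhPhi_of_pos hCpos,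
      max_eq_left (by linarith : (0:ℝ) ≤ R+1), max_eq_left (by linarith : (0:ℝ) ≤ R-1),
      max_eq_left (by linarith : (0:ℝ) ≤ R)]
    set K := 3*(C+1) with hK
    have hKpos : 0 < K := by rw [hK]; linarith
    have hKne : K ≠ 0 := ne_of_gt hKpos
    have key : Real.exp ((R+1)^2/K) + Real.exp ((R-1)^2/K)
        ≤ 2 * Real.exp ((R^2+1)/K + 2*R^2/K^2) := by
      have e1 : (R+1)^2/K = (R^2+1)/K + 2*R/K := by field_simp; ring
      have e2 : (R-1)^2/K = (R^2+1)/K + -(2*R/K) := by field_simp; ring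
      rw [e1, e2, Real.exp_add, Real.exp_add]
      have hc : Real.exp (2*R/K) + Real.exp (-(2*R/K)) ≤ 2 * Real.exp ((2*R/K)^2/2) := by
        have hco := Real.cosh_le_exp_half_sq (2*R/K)
        rw [Real.cosh_eq] at hco
        linarith
      have e3 : (2*R/K)^2/2 = 2*R^2/K^2 := by field_simp
      calc Real.exp ((R^2+1)/K) * Real.exp (2*R/K) + Real.exp ((R^2+1)/K) * Real.exp (-(2*R/K))
          = Real.exp ((R^2+1)/K) * (Real.exp (2*R/K) + Real.exp (-(2*R/K))) := by ring
        _ ≤ Real.exp ((R^2+1)/K) * (2 * Real.exp ((2*R/K)^2/2)) :=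
            mul_le_mul_of_nonneg_left hc (Real.exp_pos _).le
        _ = 2 * Real.exp ((R^2+1)/K + 2*R^2/K^2) := by rw [e3, Real.exp_add]; ring
    rcases le_or_gt (3*C) (R^2) with h3C | h3C
    · have hexp : (R^2+1)/K + 2*R^2/K^2 ≤ R^2/(3*C) := by
        rw [div_add_div _ _ hKne (by positivity), div_le_div_iff₀ (by positivity) (by positivity),
          hK]
        nlinarith [mul_nonneg (mul_nonneg (by linarith : (0:ℝ) ≤ C+1)
          (by linarith : (0:ℝ) ≤ C+3)) (sub_nonneg.2 h3C),
          mul_nonneg hCpos.le (by linarith : (0:ℝ) ≤ C+1)]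
      have := Real.exp_le_exp.2 hexp
      nlinarith [Real.exp_pos (R^2/(3*C))]
    · have ha : R^2/K + 2*R^2/K^2 ≤ R^2/(3*C) := by
        rw [div_add_div _ _ hKne (by positivity), div_le_div_iff₀ (by positivity) (by positivity),
          hK]
        nlinarith [mul_nonneg (sq_nonneg R) hCpos.le, sq_nonneg R,
          mul_nonneg (mul_nonneg (sq_nonneg R) hCpos.le) (by linarith : (0:ℝ) ≤ C+1),
          mul_nonneg (mul_nonneg (sq_nonneg R) hCpos.le) (mul_nonneg (by linarith : (0:ℝ) ≤ C+1) (by linarith : (0:ℝ) ≤ C+1))]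
      have hb : (1:ℝ)/K ≤ 1/3 := by
        rw [hK]; rw [div_le_div_iff₀ (by linarith) (by norm_num)]; linarith
      have hexp : (R^2+1)/K + 2*R^2/K^2 ≤ R^2/(3*C) + 1/3 := by
        have : (R^2+1)/K = R^2/K + 1/K := by field_simp
        rw [this]; linarith
      have hPhi : Real.exp (R^2/(3*C)) ≤ Real.exp 1 :=
        Real.exp_le_exp.2 (by rw [div_le_one (by linarith)]; linarith)
      have h2e : (2:ℝ) ≤ Real.exp 1 := by
        have := Real.add_one_le_exp 1; linarith
      have h13 : (1:ℝ) ≤ Real.exp (1/3) := by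
        rw [← Real.exp_zero]; exact Real.exp_le_exp.2 (by norm_num)
      have hsplit : Real.exp (R^2/(3*C) + 1/3) = Real.exp (R^2/(3*C)) * Real.exp (1/3) :=
        Real.exp_add _ _
      have h43 : Real.exp 1 * Real.exp (1/3) = Real.exp (4/3) := by
        rw [← Real.exp_add]; norm_num
      have hmono := Real.exp_le_exp.2 hexp
      have hprod : Real.exp (R^2/(3*C)) * (Real.exp (1/3) - 1) ≤ Real.exp 1 * (Real.exp (1/3) - 1) :=
        mul_le_mul_of_nonneg_right hPhi (by linarith)
      nlinarith [exp_four_thirds_le, Real.exp_pos (R^2/(3*C))]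

lemma anhPhi_step {R C r : ℝ} (hC : 0 ≤ C) (hRC : |R| ≤ C) (hr : |r| ≤ 1) :
    anhPhi (R + r) (C + |r|) ≤ anhPhi R C + anhWeight R C * r + 3 := by
  have hdrift := anhPhi_drift hC hRC
  rcases le_or_gt 0 r with h | h
  · have habs : |r| = r := abs_of_nonneg h
    have hseg := anhPhi_segment hC hRC (Or.inl rfl) h (habs ▸ hr)
    rw [mul_one] at hseg
    rw [habs]
    have key : r * ((anhPhi (R+1) (C+1) + anhPhi (R-1) (C+1))/2 - anhPhi R C) ≤ 3 := by
      nlinarith [mul_nonneg h (show (0:ℝ) ≤ 3 -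
        ((anhPhi (R+1) (C+1) + anhPhi (R-1) (C+1))/2 - anhPhi R C) from by linarith)]
    unfold anhWeight
    nlinarith [hseg, key]
  · have habs : |r| = -r := abs_of_neg h
    have hseg := anhPhi_segment hC hRC (Or.inr rfl) (by linarith [habs ▸ abs_nonneg r] : (0:ℝ) ≤ -r)
      (by linarith [habs ▸ hr] : -r ≤ 1)
    rw [show R + -r * (-1) = R + r by ring] at hseg
    rw [show R + (-1 : ℝ) = R - 1 by ring] at hseg
    rw [habs]
    have key : (-r) * ((anhPhi (R+1) (C+1) + anhPhi (R-1) (C+1))/2 - anhPhi R C) ≤ 3 := by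
      nlinarith [mul_nonneg (by linarith : (0:ℝ) ≤ -r) (show (0:ℝ) ≤ 3 -
        ((anhPhi (R+1) (C+1) + anhPhi (R-1) (C+1))/2 - anhPhi R C) from by linarith)]
    unfold anhWeight
    nlinarith [hseg, key]

lemma cgcEnd_ge {i : ℕ} (hi : 1 ≤ i) : i ≤ cgcEnd i := by
  unfold cgcEnd
  have h := Nat.one_le_two_pow (n := padicValNat 2 i)
  omega

lemma mem_activeSet {t j : ℕ} : j ∈ activeSet t ↔ 1 ≤ j ∧ j ≤ t ∧ t ≤ cgcEnd j := by
  unfold activeSet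
  simp only [Finset.mem_filter, Finset.mem_Icc]
  tauto

lemma self_mem_activeSet {t : ℕ} (ht : 1 ≤ t) : t ∈ activeSet t :=
  mem_activeSet.2 ⟨ht, le_rfl, cgcEnd_ge ht⟩

lemma activeSet_card {t : ℕ} : (activeSet t).card ≤ t :=
  le_trans (Finset.card_filter_le _ _) (by rw [Nat.card_Icc]; omega)

lemma activeSet_prev {t j : ℕ} (h : j ∈ activeSet (t+1)) (hj : j ≠ t+1) : j ∈ activeSet t := by
  rw [mem_activeSet] at h ⊢
  exact ⟨h.1, by omega, by omega⟩

lemma activeSet_zero : activeSet 0 = ∅ := by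
  unfold activeSet
  simp

lemma notMem_activeSet_succ {u : ℕ} : u + 1 ∉ activeSet u := by
  rw [mem_activeSet]; omega

/-- Lemma 1 (meta-regret of SACS): with convex losses valued in `[0,1]` on `W`, arbitrary
expert predictions `wE · i ∈ W`, and the SACS meta-algorithm (AdaNormalHedge over the CGC
intervals) producing the plays `wA`, for any interval `[i, cgcEnd i] ∈ 𝒞` and any
`t ∈ [i, cgcEnd i]`:
`Σ_{u=i}^t (f u (wA u) − f u (wE u i)) ≤ c(t) + √(2 c(t) Σ_{u=i}^t f u (wE u i))`
with `c(t) = 3 ln(4t²)`. -/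
theorem stmt_2
    {E : Type*} [NormedAddCommGroup E] [InnerProductSpace ℝ E] [FiniteDimensional ℝ E]
    (W : Set E) (hWne : W.Nonempty) (hWconvex : Convex ℝ W)
    (f : ℕ → E → ℝ)
    (hconv : ∀ t, ConvexOn ℝ Set.univ (f t))
    (hbound : ∀ t, ∀ x ∈ W, f t x ∈ Set.Icc (0 : ℝ) 1)
    -- the expert predictions: `wE t i` is the prediction of expert `E i` at round `t`
    (wE : ℕ → ℕ → E) (hwE : ∀ t i, wE t i ∈ W)
    -- the SACS meta-algorithm
    (Rg Cg p : ℕ → ℕ → ℝ) (wA : ℕ → E)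
    (hR0 : ∀ i ≥ 1, Rg (i - 1) i = 0)
    (hC0 : ∀ i ≥ 1, Cg (i - 1) i = 0)
    (hp : ∀ t ≥ 1, ∀ i ∈ activeSet t,
      p t i = anhWeight (Rg (t - 1) i) (Cg (t - 1) i)
        / ∑ j ∈ activeSet t, anhWeight (Rg (t - 1) j) (Cg (t - 1) j))
    (hwA : ∀ t ≥ 1, wA t = ∑ i ∈ activeSet t, p t i • wE t i)
    (hRrec : ∀ t ≥ 1, ∀ i ∈ activeSet t,
      Rg t i = Rg (t - 1) i + f t (wA t) - f t (wE t i))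
    (hCrec : ∀ t ≥ 1, ∀ i ∈ activeSet t,
      Cg t i = Cg (t - 1) i + |f t (wA t) - f t (wE t i)|)
    -- an interval `[i, cgcEnd i] ∈ 𝒞` and a round `t` in it
    (i t : ℕ) (hi : 1 ≤ i) (hit : i ≤ t) (hte : t ≤ cgcEnd i) :
    ∑ u ∈ Finset.Icc i t, (f u (wA u) - f u (wE u i))
      ≤ 3 * Real.log (4 * (t : ℝ) ^ 2)
        + Real.sqrt (2 * (3 * Real.log (4 * (t : ℝ) ^ 2))
            * ∑ u ∈ Finset.Icc i t, f u (wE u i)) := by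
  -- the main invariant, by induction on rounds
  have main : ∀ u : ℕ,
      (∀ j ∈ activeSet u, |Rg u j| ≤ Cg u j)
      ∧ ((∑ j ∈ activeSet u, anhPhi (Rg u j) (Cg u j)) ≤ (u:ℝ) + 3*u*(u+1)/2)
      ∧ (1 ≤ u → wA u ∈ W) := by
    intro u
    induction u with
    | zero =>
      refine ⟨?_, ?_, by omega⟩
      · intro j hj; rw [activeSet_zero] at hj; exact absurd hj (Finset.notMem_empty j)
      · rw [activeSet_zero]; simp
    | succ u ih =>
      have hu1 : 1 ≤ u + 1 := by omega
      have hsub1 : u + 1 - 1 = u := by omega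
      have hR0' : Rg u (u+1) = 0 := by have := hR0 (u+1) hu1; rwa [hsub1] at this
      have hC0' : Cg u (u+1) = 0 := by have := hC0 (u+1) hu1; rwa [hsub1] at this
      -- facts about round u state for active experts
      have hact : ∀ j ∈ activeSet (u+1), |Rg u j| ≤ Cg u j := by
        intro j hj
        rcases eq_or_ne j (u+1) with rfl | hne
        · rw [hR0', hC0']; simp
        · exact ih.1 j (activeSet_prev hj hne)
      have hactC : ∀ j ∈ activeSet (u+1), 0 ≤ Cg u j :=
        fun j hj => le_trans (abs_nonneg _) (hact j hj)
      set S := activeSet (u+1) with hS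
      set wgt : ℕ → ℝ := fun j => anhWeight (Rg u j) (Cg u j) with hwgt
      have hwgt0 : ∀ j ∈ S, 0 ≤ wgt j := fun j hj => anhWeight_nonneg (hactC j hj) _
      have hmemS : u + 1 ∈ S := self_mem_activeSet hu1
      have hWsum : 0 < ∑ j ∈ S, wgt j := by
        apply Finset.sum_pos' hwgt0
        exact ⟨u+1, hmemS, by rw [hwgt]; simp only [hR0', hC0']; exact anhWeight_zero_zero⟩
      have hp' : ∀ j ∈ S, p (u+1) j = wgt j / ∑ k ∈ S, wgt k := by
        intro j hj
        have := hp (u+1) hu1 j hj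
        rwa [hsub1] at this
      have hp0 : ∀ j ∈ S, 0 ≤ p (u+1) j := by
        intro j hj; rw [hp' j hj]; exact div_nonneg (hwgt0 j hj) hWsum.le
      have hpsum : ∑ j ∈ S, p (u+1) j = 1 := by
        rw [Finset.sum_congr rfl hp', ← Finset.sum_div, div_self (ne_of_gt hWsum)]
      have hwAmem : wA (u+1) ∈ W := by
        rw [hwA (u+1) hu1]
        exact hWconvex.sum_mem hp0 hpsum (fun j _ => hwE _ _)
      have hfA : f (u+1) (wA (u+1)) ∈ Set.Icc (0:ℝ) 1 := hbound (u+1) _ hwAmem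
      have hjensen : f (u+1) (wA (u+1)) ≤ ∑ j ∈ S, p (u+1) j * f (u+1) (wE (u+1) j) := by
        have h := (hconv (u+1)).map_sum_le hp0 hpsum (fun j _ => Set.mem_univ (wE (u+1) j))
        rw [← hwA (u+1) hu1] at h
        simpa [smul_eq_mul] using h
      have hsum_wr : ∑ j ∈ S, wgt j * (f (u+1) (wA (u+1)) - f (u+1) (wE (u+1) j)) ≤ 0 := by
        have e1 : ∀ j ∈ S, wgt j * (f (u+1) (wA (u+1)) - f (u+1) (wE (u+1) j))
            = (∑ k ∈ S, wgt k) * (p (u+1) j * f (u+1) (wA (u+1))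
              - p (u+1) j * f (u+1) (wE (u+1) j)) := by
          intro j hj
          rw [hp' j hj]
          field_simp
        rw [Finset.sum_congr rfl e1, ← Finset.mul_sum]
        apply mul_nonpos_of_nonneg_of_nonpos hWsum.le
        rw [Finset.sum_sub_distrib, ← Finset.sum_mul, hpsum, one_mul]
        linarith [hjensen]
      have hstep : ∀ j ∈ S, anhPhi (Rg (u+1) j) (Cg (u+1) j)
          ≤ anhPhi (Rg u j) (Cg u j)
            + wgt j * (f (u+1) (wA (u+1)) - f (u+1) (wE (u+1) j)) + 3 := by
        intro j hj
        have hr1 : |f (u+1) (wA (u+1)) - f (u+1) (wE (u+1) j)| ≤ 1 := by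
          have h1 := hfA
          have h2 := hbound (u+1) _ (hwE (u+1) j)
          rw [Set.mem_Icc] at h1 h2
          rw [abs_le]; constructor <;> linarith [h1.1, h1.2, h2.1, h2.2]
        have eR : Rg (u+1) j = Rg u j + (f (u+1) (wA (u+1)) - f (u+1) (wE (u+1) j)) := by
          have := hRrec (u+1) hu1 j hj
          rw [hsub1] at this
          rw [this]; ring
        have eC : Cg (u+1) j = Cg u j + |f (u+1) (wA (u+1)) - f (u+1) (wE (u+1) j)| := by
          have := hCrec (u+1) hu1 j hj
          rwa [hsub1] at this
        rw [eR, eC]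
        exact anhPhi_step (hactC j hj) (hact j hj) hr1
      refine ⟨?_, ?_, fun _ => hwAmem⟩
      · -- |R| ≤ C is preserved
        intro j hj
        have eR : Rg (u+1) j = Rg u j + (f (u+1) (wA (u+1)) - f (u+1) (wE (u+1) j)) := by
          have := hRrec (u+1) hu1 j hj
          rw [hsub1] at this
          rw [this]; ring
        have eC : Cg (u+1) j = Cg u j + |f (u+1) (wA (u+1)) - f (u+1) (wE (u+1) j)| := by
          have := hCrec (u+1) hu1 j hj
          rwa [hsub1] at this
        rw [eR, eC]
        calc |Rg u j + (f (u+1) (wA (u+1)) - f (u+1) (wE (u+1) j))|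
            ≤ |Rg u j| + |f (u+1) (wA (u+1)) - f (u+1) (wE (u+1) j)| := abs_add_le _ _
          _ ≤ _ := by have := hact j hj; linarith
      · -- the potential sum bound
        have h1 : ∑ j ∈ S, anhPhi (Rg (u+1) j) (Cg (u+1) j)
            ≤ ∑ j ∈ S, (anhPhi (Rg u j) (Cg u j)
              + wgt j * (f (u+1) (wA (u+1)) - f (u+1) (wE (u+1) j)) + 3) :=
          Finset.sum_le_sum hstep
        have h2 : ∑ j ∈ S, (anhPhi (Rg u j) (Cg u j)
              + wgt j * (f (u+1) (wA (u+1)) - f (u+1) (wE (u+1) j)) + 3)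
            = (∑ j ∈ S, anhPhi (Rg u j) (Cg u j))
              + (∑ j ∈ S, wgt j * (f (u+1) (wA (u+1)) - f (u+1) (wE (u+1) j)))
              + 3 * S.card := by
          rw [Finset.sum_add_distrib, Finset.sum_add_distrib, Finset.sum_const]
          push_cast
          ring
        have hcard : (S.card : ℝ) ≤ (u:ℝ) + 1 := by
          have := activeSet_card (t := u+1)
          exact_mod_cast this
        have h3 : ∑ j ∈ S, anhPhi (Rg u j) (Cg u j)
            ≤ (∑ j ∈ activeSet u, anhPhi (Rg u j) (Cg u j)) + 1 := by
          have hsub : S ⊆ insert (u+1) (activeSet u) := by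
            intro j hj
            rcases eq_or_ne j (u+1) with rfl | hne
            · exact Finset.mem_insert_self _ _
            · exact Finset.mem_insert_of_mem (activeSet_prev hj hne)
          calc ∑ j ∈ S, anhPhi (Rg u j) (Cg u j)
              ≤ ∑ j ∈ insert (u+1) (activeSet u), anhPhi (Rg u j) (Cg u j) :=
                Finset.sum_le_sum_of_subset_of_nonneg hsub
                  (fun j _ _ => anhPhi_nonneg _ _)
            _ = anhPhi (Rg u (u+1)) (Cg u (u+1))
                + ∑ j ∈ activeSet u, anhPhi (Rg u j) (Cg u j) :=
                Finset.sum_insert notMem_activeSet_succ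
            _ ≤ _ := by
                rw [hR0', hC0']
                have : anhPhi 0 0 = 1 := by unfold anhPhi; norm_num
                rw [this]; linarith
        have hM := ih.2.1
        calc ∑ j ∈ S, anhPhi (Rg (u+1) j) (Cg (u+1) j)
            ≤ (∑ j ∈ S, anhPhi (Rg u j) (Cg u j)) + 0 + 3 * S.card := by
              rw [h2] at h1; linarith [hsum_wr, h1]
          _ ≤ _ := by
              push_cast
              nlinarith [h3, hcard, hM]
  have hiS : ∀ u, i ≤ u → u ≤ t → i ∈ activeSet u :=
    fun u h1 h2 => mem_activeSet.2 ⟨hi, h1, le_trans h2 hte⟩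
  have closed : ∀ u, i ≤ u → u ≤ t →
      Rg u i = ∑ v ∈ Finset.Icc i u, (f v (wA v) - f v (wE v i)) ∧
      Cg u i = ∑ v ∈ Finset.Icc i u, |f v (wA v) - f v (wE v i)| := by
    intro u hu
    induction u, hu using Nat.le_induction with
    | base =>
      intro hut
      have hmem := hiS i le_rfl hut
      have e1 := hRrec i hi i hmem
      have e2 := hCrec i hi i hmem
      rw [hR0 i hi] at e1
      rw [hC0 i hi] at e2
      rw [Finset.Icc_self, Finset.sum_singleton, Finset.sum_singleton]
      exact ⟨by rw [e1]; ring, by rw [e2]; ring⟩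
    | succ u hu ihu =>
      intro hut
      have hut' : u ≤ t := by omega
      obtain ⟨e1, e2⟩ := ihu hut'
      have hmem := hiS (u+1) (by omega) hut
      have r1 := hRrec (u+1) (by omega) i hmem
      have r2 := hCrec (u+1) (by omega) i hmem
      have hsub1 : u + 1 - 1 = u := by omega
      rw [hsub1] at r1 r2
      rw [Finset.sum_Icc_succ_top (by omega : i ≤ u+1),
        Finset.sum_Icc_succ_top (by omega : i ≤ u+1)]
      exact ⟨by rw [r1, e1]; ring, by rw [r2, e2]⟩
  obtain ⟨eR, eC⟩ := closed t hit le_rfl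
  have hiT : i ∈ activeSet t := hiS t hit le_rfl
  have htpos : 1 ≤ t := le_trans hi hit
  have ht1 : (1:ℝ) ≤ (t:ℝ) := by exact_mod_cast htpos
  set c := 3 * Real.log (4 * (t : ℝ) ^ 2) with hc_def
  have hlogpos : 0 < Real.log (4 * (t:ℝ)^2) := Real.log_pos (by nlinarith)
  have hc : 0 < c := by rw [hc_def]; linarith
  have hphi : anhPhi (Rg t i) (Cg t i) ≤ 4 * (t:ℝ)^2 := by
    have hM := (main t).2.1
    have hsingle : anhPhi (Rg t i) (Cg t i) ≤ ∑ j ∈ activeSet t, anhPhi (Rg t j) (Cg t j) :=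
      Finset.single_le_sum (fun j _ => anhPhi_nonneg _ _) hiT
    have harith : (t:ℝ) + 3*t*(t+1)/2 ≤ 4*(t:ℝ)^2 := by nlinarith
    linarith
  have hRC : |Rg t i| ≤ Cg t i := (main t).1 i hiT
  have hCnn : 0 ≤ Cg t i := le_trans (abs_nonneg _) hRC
  have hkey : (max (Rg t i) 0)^2 ≤ c * Cg t i := by
    rcases eq_or_lt_of_le hCnn with h0 | hpos
    · have hR00 : Rg t i = 0 := abs_eq_zero.1 (le_antisymm (h0 ▸ hRC) (abs_nonneg _))
      rw [hR00, ← h0]; norm_num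
    · have hE := hphi
      rw [anhPhi_of_pos hpos] at hE
      have h4 : (0:ℝ) < 4*(t:ℝ)^2 := by nlinarith
      have hlog : (max (Rg t i) 0)^2 / (3 * Cg t i) ≤ Real.log (4*(t:ℝ)^2) :=
        (Real.le_log_iff_exp_le h4).2 hE
      rw [div_le_iff₀ (by linarith)] at hlog
      rw [hc_def]; nlinarith [hlog]
  set L := ∑ u ∈ Finset.Icc i t, f u (wE u i) with hL_def
  have hL : 0 ≤ L := Finset.sum_nonneg (fun v _ => (hbound v _ (hwE v i)).1)
  have hCRL : Cg t i ≤ max (Rg t i) 0 + 2 * L := by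
    have hterm : ∀ v ∈ Finset.Icc i t, |f v (wA v) - f v (wE v i)|
        ≤ (f v (wA v) - f v (wE v i)) + 2 * f v (wE v i) := by
      intro v hv
      rw [Finset.mem_Icc] at hv
      have hv1 : 1 ≤ v := le_trans hi hv.1
      have hA := hbound v _ ((main v).2.2 hv1)
      have hB := hbound v _ (hwE v i)
      rw [Set.mem_Icc] at hA hB
      rw [abs_le]; constructor <;> linarith [hA.1, hB.1]
    calc Cg t i = ∑ v ∈ Finset.Icc i t, |f v (wA v) - f v (wE v i)| := eC
      _ ≤ ∑ v ∈ Finset.Icc i t, ((f v (wA v) - f v (wE v i)) + 2 * f v (wE v i)) :=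
          Finset.sum_le_sum hterm
      _ = (∑ v ∈ Finset.Icc i t, (f v (wA v) - f v (wE v i))) + 2 * L := by
          rw [Finset.sum_add_distrib, ← Finset.mul_sum]
      _ = Rg t i + 2 * L := by rw [eR]
      _ ≤ max (Rg t i) 0 + 2 * L := by linarith [le_max_left (Rg t i) 0]
  set s := Real.sqrt (2 * c * L) with hs_def
  have hs0 : 0 ≤ s := Real.sqrt_nonneg _
  have hs2 : s^2 = 2*c*L := Real.sq_sqrt (by positivity)
  have hx0 : 0 ≤ max (Rg t i) 0 := le_max_right _ _
  have hfin : max (Rg t i) 0 ≤ c + s := by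
    nlinarith [hkey, hCRL, hs2, hs0, hx0, hc.le, mul_nonneg hc.le hs0,
      add_nonneg hx0 hs0, mul_nonneg hc.le hL,
      mul_le_mul_of_nonneg_left hCRL hc.le]
  calc ∑ u ∈ Finset.Icc i t, (f u (wA u) - f u (wE u i)) = Rg t i := eR.symm
    _ ≤ max (Rg t i) 0 := le_max_left _ _
    _ ≤ c + s := hfin
end

section
/- Let l_1, …, l_T and δ be nonnegative real numbers. Then Σ_{t=1}^T l_t / √(δ + Σ_{i=1}^t l_i) ≤ 2 (√(δ + Σ_{t=1}^T l_t) − √δ), with the convention 0/√0 = 0. -/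
/-! With `S t = δ + l 1 + ⋯ + l t`, each term is bounded by a telescoping difference:
`S t - S (t-1) = (√(S t) - √(S (t-1))) (√(S t) + √(S (t-1))) ≤ 2 √(S t) (√(S t) - √(S (t-1)))`,
so `l t / √(S t) ≤ 2 (√(S t) - √(S (t-1)))`, and summing gives `2 (√(S T) - √(S 0))`. -/

open Finset

lemma div_sqrt_le_two_mul_sub_sqrt {a b : ℝ} (hb : 0 ≤ b) (hba : b ≤ a) :
    (a - b) / √a ≤ 2 * (√a - √b) := by
  rcases (hb.trans hba).eq_or_lt with ha | ha
  · obtain rfl : b = 0 := le_antisymm (ha ▸ hba) hb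
    simp [← ha]
  have hsqrt : √b ≤ √a := Real.sqrt_le_sqrt hba
  rw [div_le_iff₀ (Real.sqrt_pos.mpr ha)]
  calc a - b = (√a - √b) * (√a + √b) := by
        rw [mul_comm, ← sq_sub_sq, Real.sq_sqrt ha.le, Real.sq_sqrt hb]
    _ ≤ (√a - √b) * (2 * √a) := by gcongr; linarith
    _ = 2 * (√a - √b) * √a := by ring

theorem Monotone.sum_range_sub_div_sqrt_le {s : ℕ → ℝ} (hs : Monotone s) (h0 : 0 ≤ s 0) (n : ℕ) :
    ∑ t ∈ range n, (s (t + 1) - s t) / √(s (t + 1)) ≤ 2 * (√(s n) - √(s 0)) := by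
  calc ∑ t ∈ range n, (s (t + 1) - s t) / √(s (t + 1))
      ≤ ∑ t ∈ range n, 2 * (√(s (t + 1)) - √(s t)) :=
        sum_le_sum fun t _ => div_sqrt_le_two_mul_sub_sqrt (h0.trans (hs t.zero_le)) (hs t.le_succ)
    _ = 2 * (√(s n) - √(s 0)) := by
        rw [← mul_sum, sum_range_sub fun t => √(s t)]

/-- Lemma 3.5 of Auer et al. (2002): for nonnegative reals `l 1, …, l T` and `δ ≥ 0`,
`Σ_{t=1}^T l t / √(δ + Σ_{i=1}^t l i) ≤ 2 (√(δ + Σ_{t=1}^T l t) − √δ)`,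
with the convention `0/√0 = 0` (which is Lean's convention for division by zero). -/
theorem stmt_8 (T : ℕ) (l : ℕ → ℝ) (hl : ∀ t, 0 ≤ l t) (δ : ℝ) (hδ : 0 ≤ δ) :
    ∑ t ∈ Finset.Icc 1 T, l t / Real.sqrt (δ + ∑ i ∈ Finset.Icc 1 t, l i)
      ≤ 2 * (Real.sqrt (δ + ∑ t ∈ Finset.Icc 1 T, l t) - Real.sqrt δ) := by
  let s : ℕ → ℝ := fun t => δ + ∑ i ∈ Icc 1 t, l i
  have hs0 : s 0 = δ := by simp [s]
  have hstep : ∀ t, s (t + 1) - s t = l (t + 1) := fun t => by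
    simp only [s, sum_Icc_succ_top (Nat.le_add_left 1 t)]; ring
  have hmono : Monotone s := monotone_nat_of_le_succ fun t => by linarith [hstep t, hl (t + 1)]
  have htelescoped := hmono.sum_range_sub_div_sqrt_le (hs0 ▸ hδ) T
  simp only [hstep, hs0] at htelescoped
  calc ∑ t ∈ Icc 1 T, l t / √(s t)
      = ∑ t ∈ range T, l (t + 1) / √(s (t + 1)) := by
        rw [← Ico_add_one_right_eq_Icc, sum_Ico_eq_sum_range, Nat.add_sub_cancel]
        simp only [add_comm 1]
    _ ≤ 2 * (√(s T) - √δ) := htelescoped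
end

section
/- Define Φ(R, C) = exp([R]₊² / (3C)) for C > 0 and Φ(R, 0) = 1, where [x]₊ = max(x, 0), and define w(R, C) = (Φ(R+1, C+1) − Φ(R−1, C+1))/2. Then for any real R and C with |R| ≤ C and any r ∈ [−1, 1]: Φ(R + r, C + |r|) ≤ Φ(R, C) + w(R, C)·r + 3|r| / (2(C + 1)). -/
lemma exp_third_le : Real.exp (1/3) ≤ 1.4 := by
  have h1 : Real.exp 1 < 2.7182818286 := Real.exp_one_lt_d9
  have h3 : Real.exp (1/3) ^ (3:ℕ) = Real.exp 1 := by
    rw [← Real.exp_nat_mul]; norm_num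
  nlinarith [Real.exp_pos (1/3 : ℝ), sq_nonneg (Real.exp (1/3) - 1.4),
    sq_nonneg (Real.exp (1/3) + 1.4)]

lemma exp_half_le : Real.exp (1/2) ≤ 2 := by
  have h1 : Real.exp 1 < 2.7182818286 := Real.exp_one_lt_d9
  have h3 : Real.exp (1/2) ^ (2:ℕ) = Real.exp 1 := by
    rw [← Real.exp_nat_mul]; norm_num
  nlinarith [Real.exp_pos (1/2 : ℝ)]

lemma exp_two_ninth_le : Real.exp (2/9) ≤ 1.25 := by
  by_contra h
  push_neg at h
  have h9 : (1.25:ℝ) ^ (9:ℕ) < Real.exp (2/9) ^ (9:ℕ) :=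
    pow_lt_pow_left₀ h (by norm_num) (by norm_num)
  have h3 : Real.exp (2/9) ^ (9:ℕ) = Real.exp 1 ^ (2:ℕ) := by
    rw [← Real.exp_nat_mul, ← Real.exp_nat_mul]; norm_num
  have h1 : Real.exp 1 < 2.7182818286 := Real.exp_one_lt_d9
  nlinarith [Real.exp_pos (1:ℝ)]

lemma exp_le_lin {s : ℝ} (h0 : 0 ≤ s) (h1 : s ≤ 1/3) : Real.exp s ≤ 1 + 1.2 * s := by
  have hc := convexOn_exp.2 (Set.mem_univ (0:ℝ)) (Set.mem_univ (1/3:ℝ))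
    (show (0:ℝ) ≤ 1 - 3*s by linarith) (show (0:ℝ) ≤ 3*s by linarith)
    (show (1 - 3*s) + 3*s = 1 by ring)
  simp only [smul_eq_mul, mul_zero, zero_add, Real.exp_zero, mul_one] at hc
  rw [show (3*s) * (1/3:ℝ) = s by ring] at hc
  nlinarith [exp_third_le, mul_le_mul_of_nonneg_left exp_third_le (by linarith : (0:ℝ) ≤ 3*s)]

set_option maxHeartbeats 1000000 in
/-- The key endpoint inequality. -/
lemma anhPhi_star (R C : ℝ) (hRC : |R| ≤ C) :
    anhPhi (R + 1) (C + 1) + anhPhi (R - 1) (C + 1) ≤ 2 * anhPhi R C + 3 / (C + 1) := by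
  have hC0 : 0 ≤ C := (abs_nonneg R).trans hRC
  have hD : (0:ℝ) < C + 1 := by linarith
  have hRle : R ≤ C := (abs_le.mp hRC).2
  have hRge : -C ≤ R := (abs_le.mp hRC).1
  rw [anhPhi_of_pos hD, anhPhi_of_pos hD]
  have hPhi1 : 1 ≤ anhPhi R C := one_le_anhPhi R C
  rcases le_or_gt R (-1) with h1 | h1
  · -- R ≤ -1 : both maxes are 0
    rw [max_eq_right (by linarith), max_eq_right (by linarith)]
    have : (0:ℝ)^2 / (3*(C+1)) = 0 := by simp
    rw [this, Real.exp_zero]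
    have h3 : 0 < 3/(C+1) := by positivity
    linarith
  rcases le_or_gt R 0 with h2 | h2
  · -- -1 < R ≤ 0
    rw [max_eq_left (by linarith), max_eq_right (by linarith)]
    have : (0:ℝ)^2 / (3*(C+1)) = 0 := by simp
    rw [this, Real.exp_zero]
    set s := (R+1)^2 / (3*(C+1)) with hs
    have hs0 : 0 ≤ s := by positivity
    have ht : (0:ℝ) < 1/(C+1) := by positivity
    have hsle : s ≤ 1/3 * (1/(C+1)) := by
      rw [hs, show (1:ℝ)/3 * (1/(C+1)) = 1 / (3*(C+1)) by field_simp]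
      gcongr
      nlinarith
    have htle : 1/(C+1) ≤ 1 := by
      rw [div_le_one hD]; linarith
    have hexp := exp_le_lin hs0 (by nlinarith)
    have h3C : (3:ℝ)/(C+1) = 3 * (1/(C+1)) := by ring
    rw [h3C]
    nlinarith
  -- now R > 0
  have hCpos : 0 < C := lt_of_lt_of_le h2 hRle
  rw [anhPhi_of_pos hCpos, show max (R+1) 0 = R + 1 from max_eq_left (by linarith),
    show max R 0 = R from max_eq_left (by linarith)]
  rcases le_or_gt R 1 with h3 | h3
  · -- 0 < R ≤ 1
    rw [show max (R-1) 0 = 0 from max_eq_right (by linarith)]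
    have : (0:ℝ)^2 / (3*(C+1)) = 0 := by simp
    rw [this, Real.exp_zero]
    obtain ⟨E, hE⟩ : ∃ E : ℝ, E = Real.exp (R^2 / (3*(C+1))) := ⟨_, rfl⟩
    have hE1 : 1 ≤ E := by rw [hE]; exact Real.one_le_exp (by positivity)
    have hEPhi : E ≤ Real.exp (R^2 / (3*C)) := by
      rw [hE]
      apply Real.exp_le_exp.2
      exact div_le_div_of_nonneg_left (sq_nonneg R) (by positivity) (by linarith)
    obtain ⟨b, hb⟩ : ∃ b : ℝ, b = (2*R+1) / (3*(C+1)) := ⟨_, rfl⟩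
    have hb0 : 0 < b := by rw [hb]; positivity
    have hbhalf : b ≤ 1/2 := by
      rw [hb, div_le_div_iff₀ (by positivity) (by norm_num)]
      nlinarith
    have hbD : b ≤ 1/(C+1) := by
      rw [hb, div_le_div_iff₀ (by positivity) hD]
      nlinarith
    have hsplit : (R+1)^2 / (3*(C+1)) = R^2/(3*(C+1)) + b := by
      rw [hb]; field_simp; ring
    rw [hsplit, Real.exp_add, ← hE]
    have heb2 : Real.exp b ≤ 2 :=
      (Real.exp_le_exp.2 hbhalf).trans exp_half_le
    have hebb : Real.exp b - 1 ≤ b * Real.exp b := by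
      have h := Real.add_one_le_exp (-b)
      have hp : 0 < Real.exp b := Real.exp_pos b
      have hprod : Real.exp b * Real.exp (-b) = 1 := by
        rw [← Real.exp_add]; simp
      nlinarith [mul_le_mul_of_nonneg_left h hp.le]
    have hfin : Real.exp b - 1 ≤ 2/(C+1) := by
      have h2 : (2:ℝ)/(C+1) = 2 * (1/(C+1)) := by ring
      rw [h2]
      nlinarith [mul_le_mul_of_nonneg_left heb2 hb0.le]
    have h32 : (2:ℝ)/(C+1) ≤ 3/(C+1) := by gcongr <;> norm_num
    -- E * exp b + 1 ≤ 2 * exp(R²/3C) + 3/(C+1)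
    nlinarith [mul_le_mul_of_nonneg_left heb2 (by linarith : (0:ℝ) ≤ E - 1)]
  · -- R > 1
    rw [show max (R-1) 0 = R - 1 from max_eq_left (by linarith)]
    have hC1 : (1:ℝ) < C := lt_of_lt_of_le h3 hRle
    obtain ⟨A, hA⟩ : ∃ A : ℝ, A = R^2 / (3*(C+1)) := ⟨_, rfl⟩
    obtain ⟨s, hs⟩ : ∃ s : ℝ, s = 1 / (3*(C+1)) := ⟨_, rfl⟩
    obtain ⟨p, hp⟩ : ∃ p : ℝ, p = 2*R / (3*(C+1)) := ⟨_, rfl⟩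
    obtain ⟨q, hq⟩ : ∃ q : ℝ, q = R^2 / (3*C*(C+1)) := ⟨_, rfl⟩
    have hA0 : 0 ≤ A := by rw [hA]; positivity
    have hs0 : 0 < s := by rw [hs]; positivity
    have hp0 : 0 < p := by rw [hp]; positivity
    have hq0 : 0 < q := by rw [hq]; positivity
    have hp23 : p ≤ 2/3 := by
      rw [hp, div_le_div_iff₀ (by positivity) (by norm_num)]
      nlinarith
    have hq34 : 3*p^2/4 ≤ q := by
      have h1 : 3*p^2/4 = R^2/(3*(C+1)^2) := by rw [hp]; field_simp; ring
      rw [h1, hq]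
      exact div_le_div_of_nonneg_left (sq_nonneg R) (by positivity) (by nlinarith)
    have hPhiC : Real.exp (R^2/(3*C)) = Real.exp A * Real.exp q := by
      rw [← Real.exp_add, hA, hq]
      congr 1
      field_simp
    have hplus : (R+1)^2/(3*(C+1)) = A + p + s := by
      rw [hA, hp, hs]; field_simp; ring
    have hminus : (R-1)^2/(3*(C+1)) = A - p + s := by
      rw [hA, hp, hs]; field_simp; ring
    rw [hplus, hminus, hPhiC]
    have hcosh : Real.exp p + Real.exp (-p) ≤ 2 * Real.exp (p^2/2) := by
      have h := Real.cosh_le_exp_half_sq p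
      rw [Real.cosh_eq] at h
      linarith
    have hEA : 0 < Real.exp A := Real.exp_pos A
    have hfactor : Real.exp (A + p + s) + Real.exp (A - p + s)
        = Real.exp A * Real.exp s * (Real.exp p + Real.exp (-p)) := by
      rw [show A + p + s = (A + s) + p by ring, show A - p + s = (A + s) + (-p) by ring]
      simp only [Real.exp_add]
      ring
    rw [hfactor]
    have hEs : 0 < Real.exp s := Real.exp_pos s
    have step1 : Real.exp A * Real.exp s * (Real.exp p + Real.exp (-p))
        ≤ 2 * Real.exp A * Real.exp s * Real.exp (p^2/2) := by
      nlinarith [mul_pos hEA hEs]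
    rcases le_or_gt s (p^2/4) with hcase | hcase
    · -- s ≤ p²/4 : bounded by 2Φ already
      have hmul : Real.exp s * Real.exp (p^2/2) ≤ Real.exp q := by
        rw [← Real.exp_add]
        apply Real.exp_le_exp.2
        nlinarith
      have h3pos : 0 < 3/(C+1) := by positivity
      have := mul_le_mul_of_nonneg_left hmul (le_of_lt hEA)
      nlinarith [this, step1]
    · -- s > p²/4
      have hps : p = 2*R*s := by rw [hp, hs]; ring
      have hAs : A = R^2*s := by rw [hA, hs]; ring
      have hA1 : A ≤ 1 := by
        rw [hps] at hcase
        rw [hAs]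
        nlinarith [hs0, sq_nonneg R]
      have heA : Real.exp A ≤ 2.7182818286 := by
        calc Real.exp A ≤ Real.exp 1 := Real.exp_le_exp.2 hA1
          _ ≤ 2.7182818286 := Real.exp_one_lt_d9.le
      have hep2 : Real.exp (p^2/2) ≤ 1.25 := by
        apply (Real.exp_le_exp.2 ?_).trans exp_two_ninth_le
        nlinarith
      have hs13 : s ≤ 1/3 := by
        rw [hs, div_le_div_iff₀ (by positivity) (by norm_num)]
        linarith
      have hexps := exp_le_lin hs0.le hs13
      have hq2 : p^2/2 ≤ q := by nlinarith
      have hlow : Real.exp (p^2/2) ≤ Real.exp q := Real.exp_le_exp.2 hq2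
      have h9s : 3/(C+1) = 9 * s := by rw [hs]; field_simp; ring
      rw [h9s]
      have hEp2pos : 0 < Real.exp (p^2/2) := Real.exp_pos _
      have c2 : 2*Real.exp A*Real.exp s*Real.exp (p^2/2)
          = 2*Real.exp A*Real.exp (p^2/2)
            + 2*(Real.exp A*Real.exp (p^2/2))*(Real.exp s - 1) := by ring
      have c3 : 2*Real.exp A*Real.exp (p^2/2) ≤ 2*(Real.exp A*Real.exp q) := by
        have := mul_le_mul_of_nonneg_left hlow (le_of_lt hEA)
        nlinarith [this]
      have f1 : Real.exp A * Real.exp (p^2/2) ≤ 2.7182818286 * 1.25 :=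
        mul_le_mul heA hep2 hEp2pos.le (by norm_num)
      have f2 : 0 ≤ Real.exp s - 1 := by linarith [Real.one_le_exp hs0.le]
      have f3 : Real.exp s - 1 ≤ 1.2*s := by linarith
      have c4 : (Real.exp A*Real.exp (p^2/2))*(Real.exp s - 1)
          ≤ (2.7182818286 * 1.25)*(1.2*s) :=
        mul_le_mul f1 f3 f2 (by norm_num)
      linarith [step1, c2, c3, c4, hs0]

lemma anhPhi_chord (R C r σ : ℝ) (hRC : |R| ≤ C) (h0 : 0 ≤ r) (h1 : r ≤ 1) :
    anhPhi (R + σ * r) (C + r) ≤ (1 - r) * anhPhi R C + r * anhPhi (R + σ) (C + 1) := by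
  have hC0 : 0 ≤ C := (abs_nonneg R).trans hRC
  have hexp : ∀ a b : ℝ, Real.exp ((1-r)*a + r*b) ≤ (1-r)*Real.exp a + r*Real.exp b := by
    intro a b
    have hc := convexOn_exp.2 (Set.mem_univ a) (Set.mem_univ b)
      (show (0:ℝ) ≤ 1 - r by linarith) h0 (show (1 - r) + r = 1 by ring)
    simpa [smul_eq_mul] using hc
  rcases lt_or_ge 0 C with hC | hC
  · -- C > 0
    have hCr : 0 < C + r := by linarith
    have hC1 : 0 < C + 1 := by linarith
    rw [anhPhi_of_pos hCr, anhPhi_of_pos hC, anhPhi_of_pos hC1]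
    set u0 := max R 0 with hu0
    set u1 := max (R + σ) 0 with hu1
    set u := max (R + σ * r) 0 with hu
    have hu0n : 0 ≤ u0 := le_max_right _ _
    have hu1n : 0 ≤ u1 := le_max_right _ _
    have hun : 0 ≤ u := le_max_right _ _
    have huv : u ≤ (1-r)*u0 + r*u1 := by
      apply max_le _ (add_nonneg (mul_nonneg (by linarith) hu0n) (mul_nonneg h0 hu1n))
      have e1 : R ≤ u0 := le_max_left _ _
      have e2 : R + σ ≤ u1 := le_max_left _ _
      nlinarith
    have hvn : 0 ≤ (1-r)*u0 + r*u1 := add_nonneg (mul_nonneg (by linarith) hu0n) (mul_nonneg h0 hu1n)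
    have hsq : u^2 ≤ ((1-r)*u0 + r*u1)^2 := by nlinarith
    have hcs : ((1-r)*u0 + r*u1)^2 / (3*(C+r)) ≤ (1-r)*(u0^2/(3*C)) + r*(u1^2/(3*(C+1))) := by
      have hN : (1-r)*(u0^2/(3*C)) + r*(u1^2/(3*(C+1)))
          = ((1-r)*u0^2*(C+1) + r*u1^2*C) / (3*C*(C+1)) := by
        field_simp
      rw [hN, div_le_div_iff₀ (by positivity) (by positivity)]
      nlinarith [mul_nonneg (mul_nonneg h0 (show (0:ℝ) ≤ 1 - r by linarith))
        (sq_nonneg (u0*(C+1) - u1*C))]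
    have hmain : u^2/(3*(C+r)) ≤ (1-r)*(u0^2/(3*C)) + r*(u1^2/(3*(C+1))) := by
      refine le_trans ?_ hcs
      gcongr
    calc Real.exp (u^2/(3*(C+r)))
        ≤ Real.exp ((1-r)*(u0^2/(3*C)) + r*(u1^2/(3*(C+1)))) := Real.exp_le_exp.2 hmain
      _ ≤ (1-r)*Real.exp (u0^2/(3*C)) + r*Real.exp (u1^2/(3*(C+1))) := hexp _ _
  · -- C = 0, R = 0
    have hCz : C = 0 := le_antisymm hC hC0
    have hRz : R = 0 := by
      have := abs_nonpos_iff.mp (hRC.trans_eq hCz)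
      exact this
    subst hRz; subst hCz
    rcases eq_or_lt_of_le h0 with hr0 | hr0
    · simp [← hr0, anhPhi]
    · have h01 : (0:ℝ) < 0 + 1 := by norm_num
      rw [anhPhi_of_pos (show (0:ℝ) < 0 + r by linarith),
        anhPhi_of_pos (show (0:ℝ) < (0:ℝ) + 1 by norm_num)]
      have hphi0 : anhPhi 0 0 = 1 := by simp [anhPhi]
      rw [hphi0]
      have hmax : max (0 + σ * r) 0 = r * max (0 + σ) 0 := by
        rcases le_or_gt σ 0 with hσ | hσ
        · rw [max_eq_right, max_eq_right] <;> [skip; linarith; nlinarith]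
          simp
        · rw [max_eq_left, max_eq_left] <;> [skip; linarith; nlinarith]
          ring
      rw [hmax]
      have harg : (r * max (0 + σ) 0)^2 / (3 * (0 + r))
          = (1-r) * 0 + r * ((max (0 + σ) 0)^2 / (3 * ((0:ℝ)+1))) := by
        field_simp; ring
      rw [harg]
      calc Real.exp ((1-r)*0 + r*((max (0 + σ) 0)^2/(3*((0:ℝ)+1))))
          ≤ (1-r)*Real.exp 0 + r*Real.exp ((max (0 + σ) 0)^2/(3*((0:ℝ)+1))) := hexp _ _
        _ = (1-r)*1 + r*Real.exp ((max (0 + σ) 0)^2/(3*((0:ℝ)+1))) := by rw [Real.exp_zero]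



/-- Lemma 5 of Luo and Schapire (2015): for any reals `R, C` with `|R| ≤ C` and any
`r ∈ [−1, 1]`, `Φ(R + r, C + |r|) ≤ Φ(R, C) + w(R, C)·r + 3|r|/(2(C + 1))`. -/
theorem stmt_11 (R C r : ℝ) (hRC : |R| ≤ C) (hr : r ∈ Set.Icc (-1 : ℝ) 1) :
    anhPhi (R + r) (C + |r|)
      ≤ anhPhi R C + anhWeight R C * r + 3 * |r| / (2 * (C + 1)) := by
  obtain ⟨hrl, hru⟩ := hr
  have hC0 : 0 ≤ C := (abs_nonneg R).trans hRC
  have hD : (0:ℝ) < C + 1 := by linarith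
  have hstar := anhPhi_star R C hRC
  have hkey : anhPhi (R+1) (C+1) + anhPhi (R-1) (C+1) - 2 * anhPhi R C ≤ 3 * (1/(C+1)) := by
    have h3 : (3:ℝ)/(C+1) = 3 * (1/(C+1)) := by ring
    linarith [h3 ▸ hstar]
  have hgoal : 3 * |r| / (2 * (C + 1)) = |r| * (3 * (1/(C+1))) / 2 := by
    field_simp
  rw [hgoal]
  unfold anhWeight
  rcases le_or_gt 0 r with h | h
  · rw [abs_of_nonneg h]
    have hch := anhPhi_chord R C r 1 hRC h hru
    rw [one_mul] at hch
    set P := anhPhi (R+1) (C+1)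
    set M := anhPhi (R-1) (C+1)
    set Z := anhPhi R C
    have hmul : r * (P + M - 2*Z) ≤ r * (3 * (1/(C+1))) :=
      mul_le_mul_of_nonneg_left hkey h
    linarith
  · rw [abs_of_neg h]
    have hch := anhPhi_chord R C (-r) (-1) hRC (by linarith) (by linarith)
    rw [show R + (-1) * (-r) = R + r by ring, show R + (-1) = R - 1 by ring] at hch
    set P := anhPhi (R+1) (C+1)
    set M := anhPhi (R-1) (C+1)
    set Z := anhPhi R C
    have hmul : (-r) * (P + M - 2*Z) ≤ (-r) * (3 * (1/(C+1))) :=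
      mul_le_mul_of_nonneg_left hkey (by linarith)
    linarith
end

section
/- Let a_0 > 0 and a_1, …, a_m ∈ [0, 1] be real numbers, and let f : (0, ∞) → [0, ∞) be a nonincreasing function. Then Σ_{i=1}^m a_i · f(a_0 + a_1 + ⋯ + a_{i−1}) ≤ f(a_0) + ∫_{a_0}^{a_0 + a_1 + ⋯ + a_m} f(x) dx. -/
theorem aux_12 (m : ℕ) (a₀ : ℝ) (ha₀ : 0 < a₀) (a : ℕ → ℝ)
    (ha : ∀ i ∈ Finset.Icc 1 m, a i ∈ Set.Icc (0 : ℝ) 1)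
    (f : ℝ → ℝ)
    (hf_nonneg : ∀ x ∈ Set.Ioi (0 : ℝ), 0 ≤ f x)
    (hf_anti : AntitoneOn f (Set.Ioi (0 : ℝ))) :
    ∑ i ∈ Finset.Icc 1 m, a i * f (a₀ + ∑ j ∈ Finset.Icc 1 (i - 1), a j)
      ≤ f a₀ - f (a₀ + ∑ j ∈ Finset.Icc 1 m, a j)
        + ∫ x in a₀..(a₀ + ∑ j ∈ Finset.Icc 1 m, a j), f x := by
  induction m with
  | zero => simp
  | succ n ih =>
    have haN : ∀ i ∈ Finset.Icc 1 n, a i ∈ Set.Icc (0 : ℝ) 1 := by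
      intro i hi
      exact ha i (Finset.mem_Icc.mpr ⟨(Finset.mem_Icc.mp hi).1,
        (Finset.mem_Icc.mp hi).2.trans (Nat.le_succ n)⟩)
    have hSn_pos : 0 < a₀ + ∑ j ∈ Finset.Icc 1 n, a j := by
      have : 0 ≤ ∑ j ∈ Finset.Icc 1 n, a j :=
        Finset.sum_nonneg fun j hj => (haN j hj).1
      linarith
    have haS : a (n + 1) ∈ Set.Icc (0 : ℝ) 1 :=
      ha _ (Finset.mem_Icc.mpr ⟨Nat.succ_le_succ (Nat.zero_le n), le_refl _⟩)
    have hsum : ∑ j ∈ Finset.Icc 1 (n + 1), a j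
        = (∑ j ∈ Finset.Icc 1 n, a j) + a (n + 1) :=
      Finset.sum_Icc_succ_top (Nat.succ_le_succ (Nat.zero_le n)) a
    set Sn := a₀ + ∑ j ∈ Finset.Icc 1 n, a j with hSn
    set Sm := a₀ + ∑ j ∈ Finset.Icc 1 (n + 1), a j with hSm
    have hSmSn : Sm = Sn + a (n + 1) := by rw [hSm, hsum, hSn]; ring
    have hle : Sn ≤ Sm := by rw [hSmSn]; linarith [haS.1]
    have hSm_pos : 0 < Sm := lt_of_lt_of_le hSn_pos hle
    have ha0Sn : a₀ ≤ Sn := by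
      have : 0 ≤ ∑ j ∈ Finset.Icc 1 n, a j :=
        Finset.sum_nonneg fun j hj => (haN j hj).1
      rw [hSn]; linarith
    -- integrability
    have hint1 : IntervalIntegrable f MeasureTheory.volume a₀ Sn := by
      apply AntitoneOn.intervalIntegrable
      apply hf_anti.mono
      rw [Set.uIcc_of_le ha0Sn]
      intro x hx; exact lt_of_lt_of_le ha₀ hx.1
    have hint2 : IntervalIntegrable f MeasureTheory.volume Sn Sm := by
      apply AntitoneOn.intervalIntegrable
      apply hf_anti.mono
      rw [Set.uIcc_of_le hle]
      intro x hx; exact lt_of_lt_of_le hSn_pos hx.1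
    -- sum split
    rw [Finset.sum_Icc_succ_top (Nat.succ_le_succ (Nat.zero_le n))]
    have hidx : (n + 1) - 1 = n := rfl
    rw [hidx]
    -- integral split
    have hintsplit : (∫ x in a₀..Sm, f x)
        = (∫ x in a₀..Sn, f x) + ∫ x in Sn..Sm, f x :=
      (intervalIntegral.integral_add_adjacent_intervals hint1 hint2).symm
    -- bound on last term
    have hmono : f Sm ≤ f Sn := hf_anti hSn_pos hSm_pos hle
    have hbound : a (n + 1) * f Sn ≤ (f Sn - f Sm) + ∫ x in Sn..Sm, f x := by
      have hconst : (Sm - Sn) * f Sm ≤ ∫ x in Sn..Sm, f x := by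
        have := intervalIntegral.integral_mono_on hle
          (intervalIntegrable_const (c := f Sm)) hint2
          (fun x hx => hf_anti (lt_of_lt_of_le hSn_pos hx.1) hSm_pos hx.2)
        simpa [smul_eq_mul, mul_comm] using this
      have h1 : a (n + 1) * f Sn
          = a (n + 1) * (f Sn - f Sm) + a (n + 1) * f Sm := by ring
      have h2 : a (n + 1) * (f Sn - f Sm) ≤ f Sn - f Sm := by
        nlinarith [haS.1, haS.2, hmono]
      have h3 : a (n + 1) * f Sm ≤ (Sm - Sn) * f Sm :=
        le_of_eq (by rw [hSmSn]; ring)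
      nlinarith
    have ih' := ih haN
    rw [hintsplit]
    linarith

/-- Lemma 14 of Gaillard et al. (2014): let `a 0 = a₀ > 0`, `a 1, …, a m ∈ [0,1]`, and let
`f : (0,∞) → [0,∞)` be nonincreasing. Then
`Σ_{i=1}^m a i · f(a₀ + a 1 + ⋯ + a (i−1)) ≤ f a₀ + ∫_{a₀}^{a₀ + a 1 + ⋯ + a m} f(x) dx`. -/
theorem stmt_12 (m : ℕ) (a₀ : ℝ) (ha₀ : 0 < a₀) (a : ℕ → ℝ)
    (ha : ∀ i ∈ Finset.Icc 1 m, a i ∈ Set.Icc (0 : ℝ) 1)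
    (f : ℝ → ℝ)
    (hf_nonneg : ∀ x ∈ Set.Ioi (0 : ℝ), 0 ≤ f x)
    (hf_anti : AntitoneOn f (Set.Ioi (0 : ℝ))) :
    ∑ i ∈ Finset.Icc 1 m, a i * f (a₀ + ∑ j ∈ Finset.Icc 1 (i - 1), a j)
      ≤ f a₀ + ∫ x in a₀..(a₀ + ∑ j ∈ Finset.Icc 1 m, a j), f x := by
  have h := aux_12 m a₀ ha₀ a ha f hf_nonneg hf_anti
  have hpos : 0 < a₀ + ∑ j ∈ Finset.Icc 1 m, a j := by
    have : 0 ≤ ∑ j ∈ Finset.Icc 1 m, a j :=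
      Finset.sum_nonneg fun j hj => (ha j hj).1
    linarith
  have := hf_nonneg _ hpos
  linarith
end

section
/- Let [r, s] be an arbitrary interval of positive integers with r ≤ s. Then there exists a sequence of consecutive intervals I_1 = [i_1, i_2 − 1], I_2 = [i_2, i_3 − 1], …, I_v = [i_v, i_{v+1} − 1], all belonging to 𝒞, such that i_1 = r, i_v ≤ s ≤ i_{v+1} − 1, and v ≤ ⌈log₂(s − r + 2)⌉. -/
def cgcNext (i : ℕ) : ℕ := i + 2 ^ padicValNat 2 i

lemma cgcEnd_add_one (i : ℕ) : cgcEnd i + 1 = cgcNext i := by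
  have : 1 ≤ 2 ^ padicValNat 2 i := Nat.one_le_two_pow
  unfold cgcEnd cgcNext
  omega

lemma le_cgcNext (i : ℕ) : i ≤ cgcNext i := Nat.le_add_right _ _

lemma padicValNat_lt_padicValNat_cgcNext {n : ℕ} (hn : n ≠ 0) :
    padicValNat 2 n < padicValNat 2 (cgcNext n) := by
  obtain ⟨k, _, ⟨b, rfl⟩, rfl⟩ := Nat.exists_eq_two_pow_mul_odd hn
  have hval : padicValNat 2 (2 ^ k * (2 * b + 1)) = k := by
    rw [padicValNat.mul (by positivity) (by omega), padicValNat.prime_pow,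
      padicValNat.eq_zero_of_not_dvd (by omega), add_zero]
  have hnext : cgcNext (2 ^ k * (2 * b + 1)) = 2 ^ (k + 1) * (b + 1) := by
    rw [cgcNext, hval]
    ring
  rw [hval, hnext, padicValNat.mul (by positivity) (by omega), padicValNat.prime_pow]
  omega

lemma le_iterate_cgcNext (r m : ℕ) : r ≤ cgcNext^[m] r :=
  Function.id_le_iterate_of_id_le le_cgcNext m r

section

variable {r : ℕ} (hr : 0 < r)
include hr

lemma le_padicValNat_iterate_cgcNext (m : ℕ) : m ≤ padicValNat 2 (cgcNext^[m] r) := by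
  induction m with
  | zero => exact Nat.zero_le _
  | succ m ih =>
    have hpos : cgcNext^[m] r ≠ 0 := (hr.trans_le (le_iterate_cgcNext r m)).ne'
    rw [Function.iterate_succ_apply']
    exact ih.trans_lt (padicValNat_lt_padicValNat_cgcNext hpos)

lemma add_two_pow_le_iterate_cgcNext (m : ℕ) : r + 2 ^ m ≤ cgcNext^[m] r + 1 := by
  induction m with
  | zero => simp
  | succ m ih =>
    have hlen : 2 ^ m ≤ 2 ^ padicValNat 2 (cgcNext^[m] r) :=
      Nat.pow_le_pow_right two_pos (le_padicValNat_iterate_cgcNext hr m)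
    rw [Function.iterate_succ_apply', cgcNext, pow_succ]
    omega

lemma exists_lt_iterate_cgcNext (s : ℕ) : ∃ m, s < cgcNext^[m] r := by
  refine ⟨s + 1, ?_⟩
  have := add_two_pow_le_iterate_cgcNext hr (s + 1)
  have := (s + 1).lt_two_pow_self
  omega

end

/-- Lemma 5: every interval `[r, s]` of positive integers can be covered by a sequence of
consecutive CGC intervals `I_k = [idx k, idx (k+1) − 1] ∈ 𝒞`, `k = 1, …, v`, with
`idx 1 = r`, `idx v ≤ s ≤ idx (v+1) − 1` and `v ≤ ⌈log₂(s − r + 2)⌉`. -/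
theorem stmt_13 (r s : ℕ) (hr : 1 ≤ r) (hrs : r ≤ s) :
    ∃ (v : ℕ) (idx : ℕ → ℕ), 1 ≤ v ∧ idx 1 = r ∧
      (∀ k, 1 ≤ k → k ≤ v → idx (k + 1) = cgcEnd (idx k) + 1) ∧
      idx v ≤ s ∧ s ≤ idx (v + 1) - 1 ∧
      v ≤ Nat.clog 2 (s - r + 2) := by
  have hex := exists_lt_iterate_cgcNext hr s
  set v := Nat.find hex
  have hv_pos : 1 ≤ v := (Nat.find_pos hex).mpr (by simpa using hrs)
  have hlast : cgcNext^[v - 1] r ≤ s := not_lt.mp (Nat.find_min hex (by omega))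
  have hover : s < cgcNext^[v] r := Nat.find_spec hex
  have hbound : 2 ^ (v - 1) < s - r + 2 := by
    have := add_two_pow_le_iterate_cgcNext hr (v - 1)
    omega
  refine ⟨v, fun k => cgcNext^[k - 1] r, hv_pos, rfl, fun k hk _ => ?_, hlast, ?_, ?_⟩
  · show cgcNext^[k + 1 - 1] r = cgcEnd (cgcNext^[k - 1] r) + 1
    rw [cgcEnd_add_one, show k + 1 - 1 = k - 1 + 1 by omega, Function.iterate_succ_apply']
  · simpa using Nat.le_sub_one_of_lt hover
  · have := (Nat.lt_clog_iff_pow_lt one_lt_two).mpr hbound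
    omega
end

section
/- Let (s_n)_{n≥1} be a strictly increasing sequence of positive integers (the markers) and let p ≤ q be positive integers. Then there exists a sequence of consecutive intervals I_1 = [s_{i_1}, s_{i_2} − 1], I_2 = [s_{i_2}, s_{i_3} − 1], …, I_v = [s_{i_v}, s_{i_{v+1}} − 1], all belonging to 𝒞̃, such that i_1 = p, i_v ≤ q < i_{v+1}, and v ≤ ⌈log₂(q − p + 2)⌉. -/
/-!
Starting from `p`, repeatedly take the unique interval of `𝒞̃` that begins at the current index.
Writing that index as `n = 2 ^ a * m` with `m` odd, the next one is `2 ^ a * (m + 1)` with `m + 1`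
even, so the 2-adic valuation strictly increases along the chain.
Hence the `k`-th interval spans at least `2 ^ (k - 1)` indices, the first `v` intervals at least
`2 ^ v - 1`, and the chain passes `q` after at most `⌈log₂(q - p + 2)⌉` intervals.
-/

/-- `[s_n, s_{cpgcNext n} - 1]` is the only interval of `𝒞̃` starting at `s_n`, since
`n = i * 2 ^ k` with `i` odd forces `k = ν₂(n)`. -/
def cpgcNext (n : ℕ) : ℕ := n + 2 ^ padicValNat 2 n

lemma le_iterate_cpgcNext (k p : ℕ) : p ≤ cpgcNext^[k] p :=
  Function.id_le_iterate_of_id_le (fun n => Nat.le_add_right n _) k p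

lemma padicValNat_lt_padicValNat_cpgcNext {n : ℕ} (hn : n ≠ 0) :
    padicValNat 2 n < padicValNat 2 (cpgcNext n) := by
  obtain ⟨m, hnm⟩ : 2 ^ padicValNat 2 n ∣ n := pow_padicValNat_dvd
  have hm : ¬ 2 ∣ m := fun h2 => pow_succ_padicValNat_not_dvd hn <| by
    conv_rhs => rw [hnm]
    exact pow_succ 2 _ ▸ mul_dvd_mul_left _ h2
  have hdvd : 2 ^ (padicValNat 2 n + 1) ∣ cpgcNext n := by
    have : cpgcNext n = 2 ^ padicValNat 2 n * (m + 1) := by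
      rw [cpgcNext, mul_add_one, ← hnm]
    exact this ▸ pow_succ 2 _ ▸ mul_dvd_mul_left _ (by omega)
  exact (padicValNat_dvd_iff_le (by unfold cpgcNext; positivity)).mp hdvd

lemma le_padicValNat_iterate_cpgcNext {p : ℕ} (hp : p ≠ 0) (k : ℕ) :
    k ≤ padicValNat 2 (cpgcNext^[k] p) := by
  induction k with
  | zero => exact Nat.zero_le _
  | succ k ih =>
    rw [Function.iterate_succ_apply']
    have hne : cpgcNext^[k] p ≠ 0 := (hp.bot_lt.trans_le (le_iterate_cpgcNext k p)).ne'
    exact ih.trans_lt (padicValNat_lt_padicValNat_cpgcNext hne)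

lemma add_two_pow_le_iterate_cpgcNext {p : ℕ} (hp : p ≠ 0) (k : ℕ) :
    p + 2 ^ k ≤ cpgcNext^[k] p + 1 := by
  induction k with
  | zero => simp
  | succ k ih =>
    have hstep : 2 ^ k ≤ 2 ^ padicValNat 2 (cpgcNext^[k] p) :=
      Nat.pow_le_pow_right two_pos (le_padicValNat_iterate_cpgcNext hp k)
    rw [Function.iterate_succ_apply', cpgcNext, pow_succ]
    omega

lemma exists_le_lt_succ_of_le {α : Type*} [LinearOrder α] {g : ℕ → α} {q : α}
    (h0 : g 0 ≤ q) (h : ∃ n, q < g n) : ∃ N, g N ≤ q ∧ q < g (N + 1) := by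
  by_contra! hstep
  obtain ⟨n, hn⟩ := h
  have hle : ∀ k, g k ≤ q := fun k => by
    induction k with
    | zero => exact h0
    | succ k ih => exact hstep k ih
  exact (hle n).not_gt hn

theorem stmt_14_general
    (p q : ℕ) (hp : 1 ≤ p) (hpq : p ≤ q) :
    ∃ (v : ℕ) (idx : ℕ → ℕ), 1 ≤ v ∧ idx 1 = p ∧
      (∀ k, 1 ≤ k → k ≤ v → idx (k + 1) = idx k + 2 ^ padicValNat 2 (idx k)) ∧
      idx v ≤ q ∧ q < idx (v + 1) ∧
      v ≤ Nat.clog 2 (q - p + 2) := by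
  have hp0 : p ≠ 0 := by omega
  obtain ⟨N, hle, hlt⟩ : ∃ N, cpgcNext^[N] p ≤ q ∧ q < cpgcNext^[N + 1] p := by
    refine exists_le_lt_succ_of_le hpq ⟨q + 1, ?_⟩
    have := add_two_pow_le_iterate_cpgcNext hp0 (q + 1)
    have := (q + 1).lt_two_pow_self
    omega
  refine ⟨N + 1, fun k => cpgcNext^[k - 1] p, N.succ_pos, rfl, fun k hk _ => ?_, hle, hlt, ?_⟩
  · dsimp only
    rw [show k + 1 - 1 = k - 1 + 1 by omega, Function.iterate_succ_apply']
    rfl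
  · have := add_two_pow_le_iterate_cpgcNext hp0 N
    exact (Nat.lt_clog_iff_pow_lt one_lt_two).mpr (by omega)

/-- Lemma 8: given a strictly increasing sequence of positive-integer markers `sm`, with the
compact problem-dependent geometric covering intervals
`𝒞̃ = ∪_k { [sm (i·2^k), sm ((i+1)·2^k) − 1] : i odd }`, every marker interval `[sm p, sm q]`
can be covered by consecutive CPGC intervals `I_k = [sm (idx k), sm (idx (k+1)) − 1] ∈ 𝒞̃`
(the interval `[sm a, sm b − 1]` belongs to `𝒞̃` iff `b = a + 2 ^ padicValNat 2 a`), with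
`idx 1 = p`, `idx v ≤ q < idx (v+1)` and `v ≤ ⌈log₂(q − p + 2)⌉`. -/
theorem stmt_14 (sm : ℕ → ℕ) (hsm : StrictMono sm) (hsm_pos : ∀ n, 1 ≤ n → 1 ≤ sm n)
    (p q : ℕ) (hp : 1 ≤ p) (hpq : p ≤ q) :
    ∃ (v : ℕ) (idx : ℕ → ℕ), 1 ≤ v ∧ idx 1 = p ∧
      (∀ k, 1 ≤ k → k ≤ v → idx (k + 1) = idx k + 2 ^ padicValNat 2 (idx k)) ∧
      idx v ≤ q ∧ q < idx (v + 1) ∧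
      v ≤ Nat.clog 2 (q - p + 2) :=
  stmt_14_general p q hp hpq
end

section
/- Let I = [i, j − 1] and J = [j, k] be two consecutive intervals both belonging to the CGC family 𝒞 (i.e. the right endpoint of I is j − 1 and the left endpoint of J is j). Then |J| ≥ 2|I|, i.e. k − j + 1 ≥ 2(j − i). -/
/-- For any consecutive CGC intervals `I = [i, j − 1]` and `J = [j, k]` in `𝒞`
(so `j = cgcEnd i + 1` and `k = cgcEnd j`), we have `|J| ≥ 2|I|`,
i.e. `k − j + 1 ≥ 2(j − i)`. -/
theorem stmt_16 (i j k : ℕ) (hi : 1 ≤ i)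
    (hI : j = cgcEnd i + 1) (hJ : k = cgcEnd j) :
    2 * (j - i) ≤ k - j + 1 := by
  haveI : Fact (Nat.Prime 2) := ⟨Nat.prime_two⟩
  set p := padicValNat 2 i with hp
  have hpos : 1 ≤ 2 ^ p := Nat.one_le_two_pow
  have hj : j = i + 2 ^ p := by
    rw [hI, cgcEnd, ← hp]; omega
  have hdvd : 2 ^ (p + 1) ∣ j := by
    obtain ⟨c, hc⟩ : 2 ^ p ∣ i := pow_padicValNat_dvd
    have hodd : ¬ 2 ∣ c := by
      intro ⟨d, hd⟩
      have : 2 ^ (p + 1) ∣ i := ⟨d, by rw [hc, hd]; ring⟩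
      have := (padicValNat_dvd_iff_le (by omega)).mp this
      omega
    obtain ⟨d, hd⟩ : 2 ∣ c + 1 := by omega
    exact ⟨d, by rw [hj, hc]; rw [pow_succ]; nlinarith⟩
  have hjne : j ≠ 0 := by omega
  have hle : p + 1 ≤ padicValNat 2 j :=
    (padicValNat_dvd_iff_le hjne).mp hdvd
  have hk : k = j + 2 ^ padicValNat 2 j - 1 := by rw [hJ, cgcEnd]
  have h2 : 2 ^ (p + 1) ≤ 2 ^ padicValNat 2 j := Nat.pow_le_pow_right (by norm_num) hle
  have h1 : 1 ≤ 2 ^ padicValNat 2 j := Nat.one_le_two_pow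
  rw [pow_succ] at h2
  omega
end
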